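/- arXiv:1203.5191 — 8 statements merged into one kernel-verified Lean document; each statement's English description precedes it below -/
import Mathlib

section
/- If a double series ∑_{j=0}^∞ ∑_{k=0}^∞ a_{j,k} of complex numbers converges regularly, then its sum can be computed by successive summation: ∑_{j=0}^∞ ∑_{k=0}^∞ a_{j,k} = ∑_{j=0}^∞ (∑_{k=0}^∞ a_{j,k}) = ∑_{k=0}^∞ (∑_{j=0}^∞ a_{j,k}), where the left-hand side denotes the Pringsheim sum. In particular all the inner single series and the two outer single series converge. -/
/-!
Regular convergence is a Cauchy condition on rectangular blocks. Since `s_{M,N} - s_{m,n}` is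
the sum of two blocks lying beyond row `m` or column `n`, the rectangular partial sums are Cauchy
along `atTop ×ˢ atTop`, which gives the Pringsheim sum `s`; blocks inside a single row or column
show that every row and column series is Cauchy. Finally, `∑_{j ≤ m} r_j` is the limit in `n` of
`s_{m,n}`, and a double limit that exists together with the limits of the inner sequences is also
the iterated limit.
-/

open Filter Finset Topology Function

theorem tendsto_of_tendsto_uncurry {α β γ : Type*} [TopologicalSpace γ] [RegularSpace γ]
    {la : Filter α} {lb : Filter β} [lb.NeBot] {f : α → β → γ} {g : α → γ} {s : γ}
    (hf : Tendsto (uncurry f) (la ×ˢ lb) (𝓝 s)) (hg : ∀ x, Tendsto (f x) lb (𝓝 (g x))) :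
    Tendsto g la (𝓝 s) := by
  rw [(closed_nhds_basis s).tendsto_right_iff]
  rintro U ⟨hU, hUc⟩
  filter_upwards [Eventually.curry (hf hU)] with x hx using hUc.mem_of_tendsto (hg x) hx

lemma range_add_one_eq_Icc_zero (n : ℕ) : range (n + 1) = Icc 0 n := by
  rw [← Nat.Ico_zero_eq_range, Ico_add_one_right_eq_Icc]

section

variable {E : Type*} [AddCommGroup E]

def rectSum (a : ℕ → ℕ → E) (m n : ℕ) : E :=
  ∑ j ∈ range (m + 1), ∑ k ∈ range (n + 1), a j k

lemma rectSum_transpose (a : ℕ → ℕ → E) (m n : ℕ) :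
    rectSum (fun k j => a j k) n m = rectSum a m n :=
  sum_comm

lemma sum_range_add_one_sub_sum_range_add_one (f : ℕ → E) {n N : ℕ} (h : n ≤ N) :
    ∑ k ∈ range (N + 1), f k - ∑ k ∈ range (n + 1), f k = ∑ k ∈ Icc (n + 1) N, f k := by
  rw [← sum_Ico_eq_sub _ (by omega : n + 1 ≤ N + 1), Ico_add_one_right_eq_Icc]

lemma rectSum_sub_rectSum (a : ℕ → ℕ → E) {m M n N : ℕ} (hm : m ≤ M) (hn : n ≤ N) :
    rectSum a M N - rectSum a m n =
      ∑ j ∈ Icc 0 M, ∑ k ∈ Icc (n + 1) N, a j k + ∑ j ∈ Icc (m + 1) M, ∑ k ∈ Icc 0 n, a j k := by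
  have hcols : rectSum a M N - rectSum a M n = ∑ j ∈ Icc 0 M, ∑ k ∈ Icc (n + 1) N, a j k := by
    rw [rectSum, rectSum, ← sum_sub_distrib, range_add_one_eq_Icc_zero M]
    exact sum_congr rfl fun j _ => sum_range_add_one_sub_sum_range_add_one _ hn
  have hrows : rectSum a M n - rectSum a m n = ∑ j ∈ Icc (m + 1) M, ∑ k ∈ Icc 0 n, a j k := by
    rw [rectSum, rectSum, sum_range_add_one_sub_sum_range_add_one _ hm, range_add_one_eq_Icc_zero]
  rw [← hcols, ← hrows, sub_add_sub_cancel]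

lemma tendsto_sum_range_of_tendsto_rectSum [TopologicalSpace E] [RegularSpace E]
    [ContinuousAdd E] {a : ℕ → ℕ → E} {s : E} {r : ℕ → E}
    (hs : Tendsto (uncurry (rectSum a)) (atTop ×ˢ atTop) (𝓝 s))
    (hr : ∀ j, Tendsto (fun n => ∑ k ∈ range (n + 1), a j k) atTop (𝓝 (r j))) :
    Tendsto (fun m => ∑ j ∈ range (m + 1), r j) atTop (𝓝 s) :=
  tendsto_of_tendsto_uncurry hs fun _ => tendsto_finsetSum _ fun j _ => hr j

lemma tendsto_rectSum_transpose [TopologicalSpace E] {a : ℕ → ℕ → E} {s : E}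
    (hs : Tendsto (uncurry (rectSum a)) (atTop ×ˢ atTop) (𝓝 s)) :
    Tendsto (uncurry (rectSum fun k j => a j k)) (atTop ×ˢ atTop) (𝓝 s) := by
  convert hs.comp tendsto_prod_swap using 1
  ext ⟨n, m⟩
  exact rectSum_transpose a m n

end

section

variable {E : Type*} [NormedAddCommGroup E]

def IsRegularlyConvergent (a : ℕ → ℕ → E) : Prop :=
  ∀ ε : ℝ, 0 < ε → ∃ κ : ℕ, ∀ m M n N : ℕ, m ≤ M → n ≤ N → κ < max m n →
    ‖∑ j ∈ Icc m M, ∑ k ∈ Icc n N, a j k‖ < ε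

namespace IsRegularlyConvergent

variable {a : ℕ → ℕ → E}

lemma transpose (ha : IsRegularlyConvergent a) : IsRegularlyConvergent fun k j => a j k := by
  intro ε hε
  obtain ⟨κ, hκ⟩ := ha ε hε
  refine ⟨κ, fun m M n N hm hn hmn => ?_⟩
  rw [sum_comm]
  exact hκ n N m M hn hm (by rwa [max_comm])

lemma exists_forall_norm_sum_Icc_lt (ha : IsRegularlyConvergent a) {ε : ℝ} (hε : 0 < ε) :
    ∃ κ : ℕ, ∀ m M n N : ℕ, κ < max m n → ‖∑ j ∈ Icc m M, ∑ k ∈ Icc n N, a j k‖ < ε := by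
  obtain ⟨κ, hκ⟩ := ha ε hε
  refine ⟨κ, fun m M n N hmn => ?_⟩
  by_cases hm : m ≤ M
  · by_cases hn : n ≤ N
    · exact hκ m M n N hm hn hmn
    · simpa [Icc_eq_empty hn] using hε
  · simpa [Icc_eq_empty hm] using hε

lemma cauchySeq_rowSum (ha : IsRegularlyConvergent a) (j : ℕ) :
    CauchySeq fun n => ∑ k ∈ range (n + 1), a j k := by
  rw [Metric.cauchySeq_iff']
  intro ε hε
  obtain ⟨κ, hκ⟩ := ha.exists_forall_norm_sum_Icc_lt hε
  refine ⟨κ, fun n hn => ?_⟩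
  rw [dist_eq_norm, sum_range_add_one_sub_sum_range_add_one _ hn]
  simpa using hκ j j (κ + 1) n (by omega)

lemma cauchySeq_rectSum (ha : IsRegularlyConvergent a) : CauchySeq (uncurry (rectSum a)) := by
  rw [Metric.cauchySeq_iff']
  intro ε hε
  obtain ⟨κ, hκ⟩ := ha.exists_forall_norm_sum_Icc_lt (half_pos hε)
  refine ⟨(κ, κ), fun ⟨M, N⟩ ⟨hM, hN⟩ => ?_⟩
  rw [dist_eq_norm, uncurry_apply_pair, uncurry_apply_pair, rectSum_sub_rectSum a hM hN]
  calc _ ≤ _ := norm_add_le _ _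
    _ < ε / 2 + ε / 2 := add_lt_add (hκ _ _ _ _ (by simp)) (hκ _ _ _ _ (by simp))
    _ = ε := add_halves ε

end IsRegularlyConvergent

end

/-- If a double series of complex numbers converges regularly, then its
Pringsheim sum can be computed by successive summation: every row series and every column
series converges, and the two outer (iterated) series converge to the Pringsheim sum. -/
theorem regular_convergence_implies_successive_summation (a : ℕ → ℕ → ℂ)
    (hreg : ∀ ε : ℝ, 0 < ε → ∃ κ : ℕ, ∀ m M n N : ℕ, m ≤ M → n ≤ N → κ < max m n →
      ‖∑ j ∈ Finset.Icc m M, ∑ k ∈ Finset.Icc n N, a j k‖ < ε) :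
    ∃ s : ℂ, ∃ r c : ℕ → ℂ,
      (∀ ε : ℝ, 0 < ε → ∃ κ : ℕ, ∀ m n : ℕ, κ < m → κ < n →
        ‖(∑ j ∈ Finset.range (m + 1), ∑ k ∈ Finset.range (n + 1), a j k) - s‖ < ε) ∧
      (∀ j : ℕ, Tendsto (fun n => ∑ k ∈ Finset.range (n + 1), a j k) atTop (nhds (r j))) ∧
      (∀ k : ℕ, Tendsto (fun m => ∑ j ∈ Finset.range (m + 1), a j k) atTop (nhds (c k))) ∧
      Tendsto (fun m => ∑ j ∈ Finset.range (m + 1), r j) atTop (nhds s) ∧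
      Tendsto (fun n => ∑ k ∈ Finset.range (n + 1), c k) atTop (nhds s) := by
  have ha : IsRegularlyConvergent a := hreg
  obtain ⟨s, hs⟩ := cauchySeq_tendsto_of_complete ha.cauchySeq_rectSum
  rw [← prod_atTop_atTop_eq] at hs
  choose r hr using fun j => cauchySeq_tendsto_of_complete (ha.cauchySeq_rowSum j)
  choose c hc using fun k => cauchySeq_tendsto_of_complete (ha.transpose.cauchySeq_rowSum k)
  refine ⟨s, r, c, fun ε hε => ?_, hr, hc, tendsto_sum_range_of_tendsto_rectSum hs hr,
    tendsto_sum_range_of_tendsto_rectSum (tendsto_rectSum_transpose hs) hc⟩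
  have hsε := Metric.tendsto_nhds.1 hs ε hε
  rw [prod_atTop_atTop_eq, eventually_atTop_prod_self] at hsε
  obtain ⟨κ, hκ⟩ := hsε
  exact ⟨κ, fun m n hm hn => by simpa [dist_eq_norm, rectSum] using hκ m n hm.le hn.le⟩
end

section
/- A double series ∑_{j=0}^∞ ∑_{k=0}^∞ a_{j,k} of complex numbers converges regularly if and only if it converges in Pringsheim's sense and, in addition, each of its row series ∑_{k=0}^∞ a_{j,k} (j ∈ ℕ) and each of its column series ∑_{j=0}^∞ a_{j,k} (k ∈ ℕ) converges as a single series. (Equivalence of Hardy's definition of regular convergence with the restricted-sense Cauchy condition.) -/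
/-!
Regular convergence makes every block sum whose lower corner lies far out small. A stretch of a
single row or column is such a block, so the row and column series are Cauchy, and
`s_{m,n} - s_{κ,κ}` is the sum of two such blocks, so the partial sums are Cauchy in Pringsheim's
sense.

Conversely, by inclusion–exclusion of four partial sums, Pringsheim convergence makes small every
block whose corner is far out in both directions. A block that is far out only in the column
direction is split at row `κ₀` into such a block and a block within the rows `≤ κ₀`. The latter is
a tail of one of the finitely many series `∑ₖ ∑_{i ≤ j ≤ i'} a j k` with `i' ≤ κ₀`, which converge
because the rows do, so these tails are uniformly small. Transposing handles blocks far out in the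
row direction.
-/

open Filter Finset Function Topology

namespace Finset

theorem sum_Icc_eq_sum_range_sub {G : Type*} [AddCommGroup G] (f : ℕ → G) {p M : ℕ}
    (h : p ≤ M) :
    ∑ j ∈ Icc (p + 1) M, f j = ∑ j ∈ range (M + 1), f j - ∑ j ∈ range (p + 1), f j := by
  rw [← Ico_add_one_right_eq_Icc, sum_Ico_eq_sub _ (by omega)]

theorem sum_Icc_consecutive {M : Type*} [AddCommMonoid M] (f : ℕ → M) {m p N : ℕ}
    (hmp : m ≤ p + 1) (hpN : p ≤ N) :
    ∑ j ∈ Icc m p, f j + ∑ j ∈ Icc (p + 1) N, f j = ∑ j ∈ Icc m N, f j := by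
  simp only [← Ico_add_one_right_eq_Icc]
  exact sum_Ico_consecutive f hmp (by omega)

end Finset

variable {E : Type*} [NormedAddCommGroup E]

theorem cauchySeq_sum_range_succ_iff (f : ℕ → E) :
    CauchySeq (fun n => ∑ k ∈ range (n + 1), f k) ↔
      ∀ ε > 0, ∀ᶠ n in atTop, ∀ N, ‖∑ k ∈ Icc n N, f k‖ < ε := by
  rw [Metric.cauchySeq_iff]
  refine forall₂_congr fun ε hε => ⟨fun ⟨κ, hκ⟩ => ?_, fun h => ?_⟩
  · filter_upwards [eventually_gt_atTop κ] with n hn N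
    rcases lt_or_ge N n with hNn | hnN
    · simpa [Icc_eq_empty_of_lt hNn] using hε
    obtain ⟨p, rfl⟩ : ∃ p, n = p + 1 := ⟨n - 1, by omega⟩
    rw [sum_Icc_eq_sum_range_sub f (by omega), ← dist_eq_norm]
    exact hκ N (by omega) p (by omega)
  · obtain ⟨κ, hκ⟩ := eventually_atTop.1 h
    refine ⟨κ, fun p hp q hq => ?_⟩
    wlog hqp : q ≤ p generalizing p q
    · rw [dist_comm]
      exact this q hq p hp (by omega)
    rw [dist_eq_norm, ← sum_Icc_eq_sum_range_sub f hqp]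
    exact hκ (q + 1) (by omega) p

theorem tendsto_uncurry_atTop_iff (u : ℕ → ℕ → E) (s : E) :
    Tendsto (uncurry u) atTop (𝓝 s) ↔
      ∀ ε : ℝ, 0 < ε → ∃ κ : ℕ, ∀ m n : ℕ, κ < m → κ < n → ‖u m n - s‖ < ε := by
  simp only [Metric.tendsto_atTop, dist_eq_norm, Prod.forall, Prod.exists, Prod.mk_le_mk,
    uncurry_apply_pair]
  refine forall₂_congr fun ε _ => ⟨fun ⟨κ₁, κ₂, h⟩ => ⟨max κ₁ κ₂, fun m n hm hn => ?_⟩,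
    fun ⟨κ, h⟩ => ⟨κ + 1, κ + 1, fun m n hmn => h m n (by omega) (by omega)⟩⟩
  exact h m n ⟨by omega, by omega⟩

namespace DoubleSeries

def partialSum (a : ℕ → ℕ → E) (m n : ℕ) : E :=
  ∑ j ∈ range (m + 1), ∑ k ∈ range (n + 1), a j k

def blockSum (a : ℕ → ℕ → E) (m M n N : ℕ) : E :=
  ∑ j ∈ Icc m M, ∑ k ∈ Icc n N, a j k

def RegularlyConvergent (a : ℕ → ℕ → E) : Prop :=
  ∀ ε : ℝ, 0 < ε → ∃ κ : ℕ, ∀ m M n N : ℕ, m ≤ M → n ≤ N → κ < max m n →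
    ‖blockSum a m M n N‖ < ε

variable {a : ℕ → ℕ → E}

theorem partialSum_swap (a : ℕ → ℕ → E) (m n : ℕ) :
    partialSum (swap a) n m = partialSum a m n :=
  sum_comm

theorem blockSum_swap (a : ℕ → ℕ → E) (m M n N : ℕ) :
    blockSum (swap a) n N m M = blockSum a m M n N :=
  sum_comm

theorem blockSum_add_one_add_one (a : ℕ → ℕ → E) {p M q N : ℕ} (hp : p ≤ M) (hq : q ≤ N) :
    blockSum a (p + 1) M (q + 1) N =
      (partialSum a M N - partialSum a p N) - (partialSum a M q - partialSum a p q) := by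
  simp only [blockSum, partialSum, sum_Icc_eq_sum_range_sub _ hq, sum_sub_distrib,
    sum_Icc_eq_sum_range_sub _ hp]
  abel

theorem partialSum_sub_partialSum (a : ℕ → ℕ → E) {κ m n : ℕ} (hm : κ ≤ m) (hn : κ ≤ n) :
    partialSum a m n - partialSum a κ κ =
      blockSum a (κ + 1) m 0 n + blockSum a 0 κ (κ + 1) n := by
  simp only [blockSum, partialSum, ← Nat.range_succ_eq_Icc_zero, sum_Icc_eq_sum_range_sub _ hm,
    sum_Icc_eq_sum_range_sub _ hn, sum_sub_distrib]
  abel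

theorem RegularlyConvergent.swap (h : RegularlyConvergent a) :
    RegularlyConvergent (swap a) := by
  intro ε hε
  obtain ⟨κ, hκ⟩ := h ε hε
  refine ⟨κ, fun m M n N hmM hnN hmn => ?_⟩
  rw [blockSum_swap]
  exact hκ n N m M hnN hmM (by rwa [max_comm])

theorem RegularlyConvergent.exists_norm_blockSum_lt (h : RegularlyConvergent a) {ε : ℝ}
    (hε : 0 < ε) : ∃ κ, ∀ m M n N, κ < max m n → ‖blockSum a m M n N‖ < ε := by
  obtain ⟨κ, hκ⟩ := h ε hε
  refine ⟨κ, fun m M n N hmn => ?_⟩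
  rcases lt_or_ge M m with hMm | hmM
  · simpa [blockSum, Icc_eq_empty_of_lt hMm] using hε
  rcases lt_or_ge N n with hNn | hnN
  · simpa [blockSum, Icc_eq_empty_of_lt hNn] using hε
  exact hκ m M n N hmM hnN hmn

theorem RegularlyConvergent.cauchySeq_row (h : RegularlyConvergent a) (j : ℕ) :
    CauchySeq (fun n => ∑ k ∈ range (n + 1), a j k) := by
  refine (cauchySeq_sum_range_succ_iff _).2 fun ε hε => ?_
  obtain ⟨κ, hκ⟩ := h.exists_norm_blockSum_lt hε
  filter_upwards [eventually_gt_atTop κ] with n hn N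
  simpa [blockSum] using hκ j j n N (lt_max_of_lt_right hn)

theorem RegularlyConvergent.cauchySeq_partialSum (h : RegularlyConvergent a) :
    CauchySeq (uncurry (partialSum a)) := by
  refine Metric.cauchySeq_iff'.2 fun ε hε => ?_
  obtain ⟨κ, hκ⟩ := h.exists_norm_blockSum_lt (half_pos hε)
  refine ⟨(κ, κ), fun ⟨m, n⟩ ⟨hm, hn⟩ => ?_⟩
  rw [dist_eq_norm, uncurry_apply_pair, uncurry_apply_pair, partialSum_sub_partialSum a hm hn]
  calc _ ≤ _ := norm_add_le _ _
    _ < ε / 2 + ε / 2 := add_lt_add (hκ _ _ _ _ (by simp)) (hκ _ _ _ _ (by simp))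
    _ = ε := add_halves ε

theorem exists_norm_blockSum_lt_of_cauchySeq (h : CauchySeq (uncurry (partialSum a)))
    {ε : ℝ} (hε : 0 < ε) :
    ∃ κ, ∀ m M n N, m ≤ M → n ≤ N → κ < m → κ < n → ‖blockSum a m M n N‖ < ε := by
  obtain ⟨⟨κ₁, κ₂⟩, hκ⟩ := Metric.cauchySeq_iff.1 h (ε / 2) (half_pos hε)
  refine ⟨max κ₁ κ₂, fun m M n N hmM hnN hm hn => ?_⟩
  obtain ⟨p, rfl⟩ : ∃ p, m = p + 1 := ⟨m - 1, by omega⟩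
  obtain ⟨q, rfl⟩ : ∃ q, n = q + 1 := ⟨n - 1, by omega⟩
  have hdist : ∀ i j, p ≤ i → q ≤ j → ‖partialSum a i j - partialSum a p j‖ < ε / 2 := by
    intro i j hi hj
    simpa [dist_eq_norm] using hκ (i, j) ⟨by omega, by omega⟩ (p, j) ⟨by omega, by omega⟩
  rw [blockSum_add_one_add_one a (by omega) (by omega)]
  calc _ ≤ _ := norm_sub_le _ _
    _ < ε / 2 + ε / 2 := add_lt_add (hdist M N (by omega) (by omega)) (hdist M q (by omega) le_rfl)
    _ = ε := add_halves ε

theorem exists_norm_blockSum_lt_of_cauchySeq_of_rows (h : CauchySeq (uncurry (partialSum a)))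
    (hrow : ∀ j, ∃ r, Tendsto (fun n => ∑ k ∈ range (n + 1), a j k) atTop (𝓝 r))
    {ε : ℝ} (hε : 0 < ε) :
    ∃ κ, ∀ m M n N, m ≤ M → n ≤ N → κ < n → ‖blockSum a m M n N‖ < ε := by
  obtain ⟨κ₀, hκ₀⟩ := exists_norm_blockSum_lt_of_cauchySeq h (half_pos hε)
  choose r hr using hrow
  have htail : ∀ᶠ n in atTop, ∀ i ∈ range (κ₀ + 1), ∀ i' ∈ range (κ₀ + 1), ∀ N,
      ‖blockSum a i i' n N‖ < ε / 2 := by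
    simp only [eventually_all_finset]
    intro i _ i' _
    have hsum : Tendsto (fun n => ∑ k ∈ range (n + 1), ∑ j ∈ Icc i i', a j k) atTop
        (𝓝 (∑ j ∈ Icc i i', r j)) := by
      simpa only [sum_comm (s := Icc i i')] using tendsto_finsetSum (Icc i i') fun j _ => hr j
    simpa only [blockSum, sum_comm (s := Icc i i')] using
      (cauchySeq_sum_range_succ_iff _).1 hsum.cauchySeq (ε / 2) (half_pos hε)
  obtain ⟨κ₁, hκ₁⟩ := eventually_atTop.1 htail
  refine ⟨max κ₀ κ₁, fun m M n N hmM hnN hn => ?_⟩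
  have hn₀ : κ₀ < n := by omega
  have tail : ∀ i i', i ≤ κ₀ → i' ≤ κ₀ → ‖blockSum a i i' n N‖ < ε / 2 := fun i i' hi hi' =>
    hκ₁ n (by omega) i (mem_range.2 (by omega)) i' (mem_range.2 (by omega)) N
  rcases lt_or_ge κ₀ m with hm | hm
  · exact (hκ₀ m M n N hmM hnN hm hn₀).trans (half_lt_self hε)
  rcases le_or_gt M κ₀ with hM | hM
  · exact (tail m M hm hM).trans (half_lt_self hε)
  rw [blockSum, ← sum_Icc_consecutive _ (by omega : m ≤ κ₀ + 1) hM.le]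
  calc _ ≤ _ := norm_add_le _ _
    _ < ε / 2 + ε / 2 := add_lt_add (tail m κ₀ hm le_rfl) (hκ₀ _ _ _ _ hM hnN (by omega) hn₀)
    _ = ε := add_halves ε

theorem regularlyConvergent_of_cauchySeq (h : CauchySeq (uncurry (partialSum a)))
    (hrow : ∀ j, ∃ r, Tendsto (fun n => ∑ k ∈ range (n + 1), a j k) atTop (𝓝 r))
    (hcol : ∀ k, ∃ c, Tendsto (fun m => ∑ j ∈ range (m + 1), a j k) atTop (𝓝 c)) :
    RegularlyConvergent a := by
  have hswap : CauchySeq (uncurry (partialSum (swap a))) := by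
    have : uncurry (partialSum (swap a)) = uncurry (partialSum a) ∘ Prod.swap :=
      funext fun p => partialSum_swap a p.2 p.1
    rw [this]
    exact h.comp_tendsto (OrderIso.prodComm : ℕ × ℕ ≃o ℕ × ℕ).tendsto_atTop
  intro ε hε
  obtain ⟨κ₁, h₁⟩ := exists_norm_blockSum_lt_of_cauchySeq_of_rows h hrow hε
  obtain ⟨κ₂, h₂⟩ := exists_norm_blockSum_lt_of_cauchySeq_of_rows hswap hcol hε
  refine ⟨max κ₁ κ₂, fun m M n N hmM hnN hmn => ?_⟩
  rcases lt_max_iff.1 hmn with hm | hn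
  · rw [← blockSum_swap]
    exact h₂ n N m M hnN hmM (by omega)
  · exact h₁ m M n N hmM hnN (by omega)

theorem regularlyConvergent_iff [CompleteSpace E] (a : ℕ → ℕ → E) :
    RegularlyConvergent a ↔
      (∃ s, Tendsto (uncurry (partialSum a)) atTop (𝓝 s)) ∧
      (∀ j, ∃ r, Tendsto (fun n => ∑ k ∈ range (n + 1), a j k) atTop (𝓝 r)) ∧
      (∀ k, ∃ c, Tendsto (fun m => ∑ j ∈ range (m + 1), a j k) atTop (𝓝 c)) := by
  refine ⟨fun h => ⟨cauchySeq_tendsto_of_complete h.cauchySeq_partialSum,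
    fun j => cauchySeq_tendsto_of_complete (h.cauchySeq_row j),
    fun k => cauchySeq_tendsto_of_complete (h.swap.cauchySeq_row k)⟩, ?_⟩
  rintro ⟨⟨s, hs⟩, hrow, hcol⟩
  exact regularlyConvergent_of_cauchySeq hs.cauchySeq hrow hcol

end DoubleSeries

/-- A double series of complex numbers converges regularly if and only if
it converges in Pringsheim's sense and, in addition, each of its row series and each of its
column series converges as a single series (equivalence of Hardy's definition with the
restricted-sense Cauchy condition). -/
theorem regular_convergence_iff_pringsheim_and_rows_columns (a : ℕ → ℕ → ℂ) :
    (∀ ε : ℝ, 0 < ε → ∃ κ : ℕ, ∀ m M n N : ℕ, m ≤ M → n ≤ N → κ < max m n →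
      ‖∑ j ∈ Finset.Icc m M, ∑ k ∈ Finset.Icc n N, a j k‖ < ε) ↔
    ((∃ s : ℂ, ∀ ε : ℝ, 0 < ε → ∃ κ : ℕ, ∀ m n : ℕ, κ < m → κ < n →
        ‖(∑ j ∈ Finset.range (m + 1), ∑ k ∈ Finset.range (n + 1), a j k) - s‖ < ε) ∧
      (∀ j : ℕ, ∃ r : ℂ,
        Tendsto (fun n => ∑ k ∈ Finset.range (n + 1), a j k) atTop (nhds r)) ∧
      (∀ k : ℕ, ∃ c : ℂ,
        Tendsto (fun m => ∑ j ∈ Finset.range (m + 1), a j k) atTop (nhds c))) :=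
  (DoubleSeries.regularlyConvergent_iff a).trans <|
    and_congr_left' <| exists_congr fun s => tendsto_uncurry_atTop_iff _ s
end

section
/- If a double sequence (s_{m,n} : (m,n) ∈ ℕ²) of complex numbers converges regularly, then for each fixed m ∈ ℕ the single sequence (s_{m,n} : n ∈ ℕ) converges, for each fixed n ∈ ℕ the single sequence (s_{m,n} : m ∈ ℕ) converges, the double sequence converges in Pringsheim's sense to some s ∈ ℂ, and lim_{m→∞}(lim_{n→∞} s_{m,n}) = lim_{n→∞}(lim_{m→∞} s_{m,n}) = s. -/
/-! Along a row, along a column, and from the corner `(κ, κ)` to any `(M, N)` beyond it, the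
difference of values telescopes into at most three rectangular increments, each of which
lies past `κ` and is therefore small. So the rows, the columns and the double sequence itself
are Cauchy. The iterated limits then agree with the Pringsheim limit because a limit in the
product filter passes to the limits of the inner sequences, the relevant balls being closed. -/

open Filter Topology

/-- The "rectangular increment" of a double sequence, with the convention
`s (m-1) n := 0` when `m = 0` (and similarly in the second variable). -/
def rectIncrement (s : ℕ → ℕ → ℂ) (m M n N : ℕ) : ℂ :=
  s M N - (if m = 0 then 0 else s (m - 1) N) - (if n = 0 then 0 else s M (n - 1)) +
    (if m = 0 ∨ n = 0 then 0 else s (m - 1) (n - 1))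

theorem Filter.Tendsto.of_tendsto_prod {α β X : Type*} [TopologicalSpace X] [RegularSpace X]
    {f : α → β → X} {la : Filter α} {lb : Filter β} [lb.NeBot] {r : α → X} {L : X}
    (h : Tendsto ↿f (la ×ˢ lb) (𝓝 L)) (hr : ∀ a, Tendsto (f a) lb (𝓝 (r a))) :
    Tendsto r la (𝓝 L) := by
  refine (closed_nhds_basis L).tendsto_right_iff.2 fun U ⟨hU, hUc⟩ => ?_
  filter_upwards [(h.mono_left curry_le_prod).eventually_mem hU] with a ha
  exact hUc.mem_of_tendsto (hr a) ha

section RectIncrement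

variable (s : ℕ → ℕ → ℂ) (m M n N : ℕ)

theorem rectIncrement_zero_left : rectIncrement s 0 M (n + 1) N = s M N - s M n := by
  simp [rectIncrement]

theorem rectIncrement_zero_right : rectIncrement s (m + 1) M 0 N = s M N - s m N := by
  simp [rectIncrement]

theorem rectIncrement_succ_succ :
    rectIncrement s (m + 1) M (n + 1) N = s M N - s m N - s M n + s m n := by
  simp [rectIncrement]

theorem rectIncrement_succ_self_left : rectIncrement s (M + 1) M n N = 0 := by
  simp only [rectIncrement]
  split_ifs <;> simp_all

theorem rectIncrement_succ_self_right : rectIncrement s m M (N + 1) N = 0 := by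
  simp only [rectIncrement]
  split_ifs <;> simp_all

theorem sub_eq_rectIncrement_add (κ : ℕ) :
    s M N - s κ κ = rectIncrement s (κ + 1) M (κ + 1) N + rectIncrement s 0 κ (κ + 1) N +
      rectIncrement s (κ + 1) M 0 κ := by
  rw [rectIncrement_succ_succ, rectIncrement_zero_left, rectIncrement_zero_right]
  ring

end RectIncrement

def ConvergesRegularly (s : ℕ → ℕ → ℂ) : Prop :=
  ∀ ε : ℝ, 0 < ε → ∃ κ : ℕ, ∀ m M n N : ℕ, m ≤ M → n ≤ N → κ < max m n →
    ‖rectIncrement s m M n N‖ < ε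

namespace ConvergesRegularly

variable {s : ℕ → ℕ → ℂ} (h : ConvergesRegularly s)
include h

/-- Empty rectangles (`m = M + 1` or `n = N + 1`) have increment `0`; admitting them spares
the case distinctions below. -/
theorem exists_norm_rectIncrement_lt {ε : ℝ} (hε : 0 < ε) :
    ∃ κ : ℕ, ∀ m M n N : ℕ, m ≤ M + 1 → n ≤ N + 1 → κ < max m n →
      ‖rectIncrement s m M n N‖ < ε := by
  obtain ⟨κ, hκ⟩ := h ε hε
  refine ⟨κ, fun m M n N hm hn hmax => ?_⟩
  rcases hm.lt_or_eq with hm | rfl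
  · rcases hn.lt_or_eq with hn | rfl
    · exact hκ m M n N (Nat.le_of_lt_succ hm) (Nat.le_of_lt_succ hn) hmax
    · simpa [rectIncrement_succ_self_right] using hε
  · simpa [rectIncrement_succ_self_left] using hε

theorem cauchySeq_row (m : ℕ) : CauchySeq (s m) := by
  refine Metric.cauchySeq_iff'.2 fun ε hε => ?_
  obtain ⟨κ, hκ⟩ := h.exists_norm_rectIncrement_lt hε
  refine ⟨κ, fun N hN => ?_⟩
  rw [dist_eq_norm, ← rectIncrement_zero_left]
  exact hκ 0 m (κ + 1) N (by omega) (by omega) (by omega)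

theorem cauchySeq_column (n : ℕ) : CauchySeq (s · n) := by
  refine Metric.cauchySeq_iff'.2 fun ε hε => ?_
  obtain ⟨κ, hκ⟩ := h.exists_norm_rectIncrement_lt hε
  refine ⟨κ, fun M hM => ?_⟩
  rw [dist_eq_norm, ← rectIncrement_zero_right]
  exact hκ (κ + 1) M 0 n (by omega) (by omega) (by omega)

theorem cauchySeq_uncurry : CauchySeq (Function.uncurry s) := by
  refine Metric.cauchySeq_iff'.2 fun ε hε => ?_
  obtain ⟨κ, hκ⟩ := h.exists_norm_rectIncrement_lt (ε := ε / 3) (by positivity)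
  refine ⟨(κ, κ), fun ⟨M, N⟩ ⟨hM, hN⟩ => ?_⟩
  dsimp only at hM hN
  rw [dist_eq_norm, Function.uncurry_apply_pair, Function.uncurry_apply_pair,
    sub_eq_rectIncrement_add]
  calc _ ≤ ‖rectIncrement s (κ + 1) M (κ + 1) N‖ + ‖rectIncrement s 0 κ (κ + 1) N‖ +
        ‖rectIncrement s (κ + 1) M 0 κ‖ := norm_add₃_le
    _ < ε / 3 + ε / 3 + ε / 3 := by
        gcongr <;> exact hκ _ _ _ _ (by omega) (by omega) (by omega)
    _ = ε := by ring

end ConvergesRegularly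

/-- If a double sequence `(s_{m,n})` of complex numbers converges regularly,
then each row sequence and each column sequence converges, the double sequence converges in
Pringsheim's sense to some `s ∈ ℂ`, and the two iterated limits both equal `s`. -/
theorem regular_convergence_of_double_sequence (s : ℕ → ℕ → ℂ)
    (hreg : ∀ ε : ℝ, 0 < ε → ∃ κ : ℕ, ∀ m M n N : ℕ, m ≤ M → n ≤ N → κ < max m n →
      ‖rectIncrement s m M n N‖ < ε) :
    ∃ L : ℂ, ∃ r c : ℕ → ℂ,
      (∀ m : ℕ, Tendsto (fun n => s m n) atTop (nhds (r m))) ∧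
      (∀ n : ℕ, Tendsto (fun m => s m n) atTop (nhds (c n))) ∧
      (∀ ε : ℝ, 0 < ε → ∃ κ : ℕ, ∀ m n : ℕ, κ < m → κ < n → ‖s m n - L‖ < ε) ∧
      Tendsto r atTop (nhds L) ∧ Tendsto c atTop (nhds L) := by
  have h : ConvergesRegularly s := hreg
  obtain ⟨L, hL⟩ := cauchySeq_tendsto_of_complete h.cauchySeq_uncurry
  rw [← prod_atTop_atTop_eq] at hL
  choose r hr using fun m => cauchySeq_tendsto_of_complete (h.cauchySeq_row m)
  choose c hc using fun n => cauchySeq_tendsto_of_complete (h.cauchySeq_column n)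
  have hL_swap : Tendsto ↿(fun n m => s m n) (atTop ×ˢ atTop) (𝓝 L) :=
    hL.comp tendsto_prod_swap
  refine ⟨L, r, c, hr, hc, fun ε hε => ?_, hL.of_tendsto_prod hr, hL_swap.of_tendsto_prod hc⟩
  obtain ⟨κ, -, hκ⟩ := (atTop_basis.prod_self.tendsto_iff Metric.nhds_basis_ball).1 hL ε hε
  exact ⟨κ, fun m n hm hn => mem_ball_iff_norm.1 (hκ (m, n) ⟨hm.le, hn.le⟩)⟩
end

section
/- There exists a double series ∑_{j=0}^∞ ∑_{k=0}^∞ a_{j,k} of real numbers such that for every ε > 0 there exists κ ∈ ℕ with |∑_{j=m}^M ∑_{k=n}^N a_{j,k}| < ε whenever min{m,n} > κ and M ≥ m, N ≥ n, yet the double series fails to converge in Pringsheim's sense. (In contrast to single sequences, the min-type Cauchy condition does not imply convergence in Pringsheim's sense.) -/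
open Filter Finset

lemma aux_sum (a : ℕ → ℕ → ℝ) (h : a = fun j k => if j = 0 then (-1 : ℝ)^k else 0)
    (n : ℕ) (m : ℕ) :
    (∑ j ∈ Finset.range (m + 1), ∑ k ∈ Finset.range (n + 1), a j k)
      = if Even (n + 1) then 0 else 1 := by
  subst h
  rw [Finset.sum_eq_single 0]
  · simp [neg_one_geom_sum]
  · intro b _ hb; simp [hb]
  · simp

/-- There exists a double series of real numbers satisfying the min-type
Cauchy condition (for every `ε > 0` there is `κ` with `|∑_{j=m}^M ∑_{k=n}^N a_{j,k}| < ε`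
whenever `min{m,n} > κ`, `M ≥ m`, `N ≥ n`), yet failing to converge in Pringsheim's sense. -/
theorem exists_min_cauchy_not_pringsheim_convergent :
    ∃ a : ℕ → ℕ → ℝ,
      (∀ ε : ℝ, 0 < ε → ∃ κ : ℕ, ∀ m M n N : ℕ, m ≤ M → n ≤ N → κ < min m n →
        |∑ j ∈ Finset.Icc m M, ∑ k ∈ Finset.Icc n N, a j k| < ε) ∧
      ¬ ∃ s : ℝ, ∀ ε : ℝ, 0 < ε → ∃ κ : ℕ, ∀ m n : ℕ, κ < m → κ < n →
        |(∑ j ∈ Finset.range (m + 1), ∑ k ∈ Finset.range (n + 1), a j k) - s| < ε := by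
  refine ⟨fun j k => if j = 0 then (-1 : ℝ)^k else 0, ?_, ?_⟩
  · intro ε hε
    refine ⟨0, fun m M n N hm hn hmin => ?_⟩
    have hm0 : 0 < m := lt_of_lt_of_le hmin (min_le_left _ _)
    have : ∀ j ∈ Finset.Icc m M, (∑ k ∈ Finset.Icc n N,
        (if j = 0 then (-1 : ℝ)^k else 0)) = 0 := by
      intro j hj
      have : j ≠ 0 := by
        have := (Finset.mem_Icc.mp hj).1; omega
      simp [this]
    rw [Finset.sum_congr rfl this]
    simpa using hε
  · rintro ⟨s, hs⟩
    obtain ⟨κ, hκ⟩ := hs (1/2) (by norm_num)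
    have h1 := hκ (κ + 1) (2 * κ + 1) (by omega) (by omega)
    have h2 := hκ (κ + 1) (2 * κ + 2) (by omega) (by omega)
    rw [aux_sum _ rfl] at h1 h2
    have e1 : Even (2 * κ + 1 + 1) := ⟨κ + 1, by ring⟩
    have e2 : ¬ Even (2 * κ + 2 + 1) := by simp [Nat.even_add_one, parity_simps]
    rw [if_pos e1] at h1
    rw [if_neg e2] at h2
    rw [abs_sub_lt_iff] at h1 h2
    linarith [h1.1, h1.2, h2.1, h2.2]
end

section
/- Let f : [0,∞)² → ℂ be locally Lebesgue integrable. If the double integral ∫₀^∞∫₀^∞ f(u,v) du dv converges regularly, then it converges in Pringsheim's sense (to some I ∈ ℂ). -/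
/-!
Write `I(x, y)` for the rectangular partial integrals. If `x, x' > ρ`, then `I(x', y) - I(x, y)`
is, up to sign, the integral of `f` over the strip `(x, x'] × (0, y]`, which regular convergence
makes small once `ρ` is large; the same holds in the second variable. Hence `I` is Cauchy along
`atTop ×ˢ atTop`, and converges there because `ℂ` is complete.
-/

open MeasureTheory Set Filter Topology

theorem Filter.Tendsto.exists_pos_norm_sub_lt_of_atTop_prod {E : Type*} [NormedAddCommGroup E]
    {g : ℝ × ℝ → E} {L : E} (h : Tendsto g (atTop ×ˢ atTop) (𝓝 L)) {ε : ℝ} (hε : 0 < ε) :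
    ∃ ρ : ℝ, 0 < ρ ∧ ∀ x y : ℝ, ρ < x → ρ < y → ‖g (x, y) - L‖ < ε := by
  have hnear := Metric.tendsto_nhds.1 h ε hε
  rw [prod_atTop_atTop_eq, eventually_atTop_prod_self] at hnear
  obtain ⟨a, ha⟩ := hnear
  refine ⟨max a 1, by positivity, fun x y hx hy => ?_⟩
  rw [← dist_eq_norm]
  exact ha x y (le_max_left a 1 |>.trans hx.le) (le_max_left a 1 |>.trans hy.le)

variable {E : Type*} [NormedAddCommGroup E] [NormedSpace ℝ E]

noncomputable def rectPartialIntegral (f : ℝ × ℝ → E) (p : ℝ × ℝ) : E :=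
  ∫ q in Ioc 0 p.1 ×ˢ Ioc 0 p.2, f q

def IntegralConvergesRegularly (f : ℝ × ℝ → E) : Prop :=
  ∀ ε : ℝ, 0 < ε → ∃ ρ : ℝ, 0 < ρ ∧ ∀ x x₁ y y₁ : ℝ,
    0 ≤ x → x < x₁ → 0 ≤ y → y < y₁ → ρ < max x y →
    ‖∫ p in Ioc x x₁ ×ˢ Ioc y y₁, f p‖ < ε

variable {f : ℝ × ℝ → E}

theorem rectPartialIntegral_sub_left {x x' y : ℝ} (hx : 0 ≤ x) (hxx' : x ≤ x')
    (hf : IntegrableOn f (Ioc 0 x' ×ˢ Ioc 0 y)) :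
    rectPartialIntegral f (x', y) - rectPartialIntegral f (x, y) =
      ∫ p in Ioc x x' ×ˢ Ioc 0 y, f p := by
  have hsplit : Ioc 0 x' ×ˢ Ioc 0 y = Ioc 0 x ×ˢ Ioc 0 y ∪ Ioc x x' ×ˢ Ioc 0 y := by
    rw [← union_prod, Ioc_union_Ioc_eq_Ioc hx hxx']
  rw [hsplit] at hf
  rw [sub_eq_iff_eq_add', rectPartialIntegral, rectPartialIntegral, hsplit]
  exact setIntegral_union ((Ioc_disjoint_Ioc_of_le le_rfl).set_prod_left _ _)
    (measurableSet_Ioc.prod measurableSet_Ioc) hf.left_of_union hf.right_of_union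

theorem rectPartialIntegral_sub_right {x y y' : ℝ} (hy : 0 ≤ y) (hyy' : y ≤ y')
    (hf : IntegrableOn f (Ioc 0 x ×ˢ Ioc 0 y')) :
    rectPartialIntegral f (x, y') - rectPartialIntegral f (x, y) =
      ∫ p in Ioc 0 x ×ˢ Ioc y y', f p := by
  have hsplit : Ioc 0 x ×ˢ Ioc 0 y' = Ioc 0 x ×ˢ Ioc 0 y ∪ Ioc 0 x ×ˢ Ioc y y' := by
    rw [← prod_union, Ioc_union_Ioc_eq_Ioc hy hyy']
  rw [hsplit] at hf
  rw [sub_eq_iff_eq_add', rectPartialIntegral, rectPartialIntegral, hsplit]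
  exact setIntegral_union ((Ioc_disjoint_Ioc_of_le le_rfl).set_prod_right _ _)
    (measurableSet_Ioc.prod measurableSet_Ioc) hf.left_of_union hf.right_of_union

namespace IntegralConvergesRegularly

variable (hreg : IntegralConvergesRegularly f)
  (hint : ∀ x y, IntegrableOn f (Ioc 0 x ×ˢ Ioc 0 y))
include hreg hint

theorem exists_norm_sub_left_lt {ε : ℝ} (hε : 0 < ε) :
    ∃ ρ, ∀ x x' y, ρ < x → ρ < x' → ρ < y →
      ‖rectPartialIntegral f (x', y) - rectPartialIntegral f (x, y)‖ < ε := by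
  obtain ⟨ρ, hρ, hsmall⟩ := hreg ε hε
  refine ⟨ρ, fun x x' y hx hx' hy => ?_⟩
  wlog hxx' : x ≤ x' generalizing x x'
  · rw [norm_sub_rev]
    exact this x' x hx' hx (le_of_not_ge hxx')
  obtain rfl | hlt := hxx'.eq_or_lt
  · simpa using hε
  rw [rectPartialIntegral_sub_left (hρ.trans hx).le hxx' (hint x' y)]
  exact hsmall x x' 0 y (hρ.trans hx).le hlt le_rfl (hρ.trans hy) (lt_max_of_lt_left hx)

theorem exists_norm_sub_right_lt {ε : ℝ} (hε : 0 < ε) :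
    ∃ ρ, ∀ x y y', ρ < x → ρ < y → ρ < y' →
      ‖rectPartialIntegral f (x, y') - rectPartialIntegral f (x, y)‖ < ε := by
  obtain ⟨ρ, hρ, hsmall⟩ := hreg ε hε
  refine ⟨ρ, fun x y y' hx hy hy' => ?_⟩
  wlog hyy' : y ≤ y' generalizing y y'
  · rw [norm_sub_rev]
    exact this y' y hy' hy (le_of_not_ge hyy')
  obtain rfl | hlt := hyy'.eq_or_lt
  · simpa using hε
  rw [rectPartialIntegral_sub_right (hρ.trans hy).le hyy' (hint x y')]
  exact hsmall 0 x y y' le_rfl (hρ.trans hx) (hρ.trans hy).le hlt (lt_max_of_lt_right hy)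

theorem cauchy_map_rectPartialIntegral :
    Cauchy (map (rectPartialIntegral f) (atTop ×ˢ atTop)) := by
  refine Metric.cauchy_iff.2 ⟨inferInstance, fun ε hε => ?_⟩
  obtain ⟨ρ₁, hρ₁⟩ := hreg.exists_norm_sub_left_lt hint (half_pos hε)
  obtain ⟨ρ₂, hρ₂⟩ := hreg.exists_norm_sub_right_lt hint (half_pos hε)
  refine ⟨_, image_mem_map (prod_mem_prod (Ioi_mem_atTop (max ρ₁ ρ₂))
    (Ioi_mem_atTop (max ρ₁ ρ₂))), ?_⟩
  rintro _ ⟨⟨x, y⟩, ⟨hx, hy⟩, rfl⟩ _ ⟨⟨x', y'⟩, ⟨hx', hy'⟩, rfl⟩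
  simp only [mem_Ioi, max_lt_iff] at hx hy hx' hy'
  calc dist (rectPartialIntegral f (x, y)) (rectPartialIntegral f (x', y'))
      ≤ ‖rectPartialIntegral f (x', y) - rectPartialIntegral f (x, y)‖
        + ‖rectPartialIntegral f (x', y') - rectPartialIntegral f (x', y)‖ := by
        rw [dist_comm, dist_eq_norm, add_comm]
        exact norm_sub_le_norm_sub_add_norm_sub _ _ _
    _ < ε / 2 + ε / 2 :=
        add_lt_add (hρ₁ x x' y hx.1 hx'.1 hy.1) (hρ₂ x' y y' hx'.2 hy.2 hy'.2)
    _ = ε := add_halves ε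

end IntegralConvergesRegularly

/-- Let `f : [0,∞)² → ℂ` be locally Lebesgue integrable. If the double
integral `∫₀^∞∫₀^∞ f` converges regularly, then it converges in Pringsheim's sense to
some `I ∈ ℂ`. -/
theorem regular_convergence_implies_pringsheim_integral (f : ℝ × ℝ → ℂ)
    (hloc : ∀ a₁ b₁ a₂ b₂ : ℝ, 0 ≤ a₁ → 0 ≤ a₂ →
      IntegrableOn f (Icc a₁ b₁ ×ˢ Icc a₂ b₂))
    (hreg : ∀ ε : ℝ, 0 < ε → ∃ ρ : ℝ, 0 < ρ ∧ ∀ x x₁ y y₁ : ℝ,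
      0 ≤ x → x < x₁ → 0 ≤ y → y < y₁ → ρ < max x y →
      ‖∫ p in Ioc x x₁ ×ˢ Ioc y y₁, f p‖ < ε) :
    ∃ I : ℂ, ∀ ε : ℝ, 0 < ε → ∃ ρ : ℝ, 0 < ρ ∧ ∀ x y : ℝ, ρ < x → ρ < y →
      ‖(∫ p in Ioc (0:ℝ) x ×ˢ Ioc (0:ℝ) y, f p) - I‖ < ε := by
  have hint (x y : ℝ) : IntegrableOn f (Ioc 0 x ×ˢ Ioc 0 y) :=
    (hloc 0 x 0 y le_rfl le_rfl).mono_set (prod_mono Ioc_subset_Icc_self Ioc_subset_Icc_self)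
  obtain ⟨I, hI⟩ := cauchy_map_iff_exists_tendsto.1
    (IntegralConvergesRegularly.cauchy_map_rectPartialIntegral hreg hint)
  exact ⟨I, fun ε hε => hI.exists_pos_norm_sub_lt_of_atTop_prod hε⟩
end

section
/- Let f : [0,∞)² → ℂ be locally Lebesgue integrable. If the double integral ∫₀^∞∫₀^∞ f(u,v) du dv converges regularly, then the 'horizontal strip' integrals ∫₀^{x₁} ∫_y^{y₁} f(u,v) du dv have a finite limit as x₁ → ∞ locally uniformly in (y, y₁) with y₁ > y ≥ 0; that is, for every c > 0 and ε > 0 there exists ρ₃ = ρ₃(c,ε) > 0 and, for each pair (y,y₁) with 0 ≤ y < y₁ ≤ c, a finite limit, such that the strip integral is within ε of its limit for all x₁ > ρ₃ simultaneously for all 0 ≤ y < y₁ ≤ c. Analogously, the 'vertical strip' integrals ∫_x^{x₁} ∫₀^{y₁} f(u,v) du dv have a finite limit as y₁ → ∞ locally uniformly in (x, x₁) with x₁ > x ≥ 0. -/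
open MeasureTheory Set Filter

lemma split_left (f : ℝ × ℝ → ℂ) (S : Set ℝ) (a m b : ℝ) (ham : a ≤ m) (hmb : m ≤ b)
    (h1 : IntegrableOn f (Ioc a m ×ˢ S)) (h2 : IntegrableOn f (Ioc m b ×ˢ S))
    (hS : MeasurableSet S) :
    ∫ p in Ioc a b ×ˢ S, f p = (∫ p in Ioc a m ×ˢ S, f p) + ∫ p in Ioc m b ×ˢ S, f p := by
  have hdisj : Disjoint (Ioc a m ×ˢ S) (Ioc m b ×ˢ S) := by
    rw [Set.disjoint_left]
    rintro ⟨u, v⟩ ⟨h1, _⟩ ⟨h2, _⟩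
    exact absurd h2.1 (not_lt.2 h1.2)
  have hun : Ioc a m ×ˢ S ∪ Ioc m b ×ˢ S = Ioc a b ×ˢ S := by
    rw [← Set.union_prod, Set.Ioc_union_Ioc_eq_Ioc ham hmb]
  rw [← hun, setIntegral_union hdisj (measurableSet_Ioc.prod hS) h1 h2]

lemma split_right (f : ℝ × ℝ → ℂ) (S : Set ℝ) (a m b : ℝ) (ham : a ≤ m) (hmb : m ≤ b)
    (h1 : IntegrableOn f (S ×ˢ Ioc a m)) (h2 : IntegrableOn f (S ×ˢ Ioc m b))
    (hS : MeasurableSet S) :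
    ∫ p in S ×ˢ Ioc a b, f p = (∫ p in S ×ˢ Ioc a m, f p) + ∫ p in S ×ˢ Ioc m b, f p := by
  have hdisj : Disjoint (S ×ˢ Ioc a m) (S ×ˢ Ioc m b) := by
    rw [Set.disjoint_left]
    rintro ⟨u, v⟩ ⟨_, h1⟩ ⟨_, h2⟩
    exact absurd h2.1 (not_lt.2 h1.2)
  have hun : S ×ˢ Ioc a m ∪ S ×ˢ Ioc m b = S ×ˢ Ioc a b := by
    rw [← Set.prod_union, Set.Ioc_union_Ioc_eq_Ioc ham hmb]
  rw [← hun, setIntegral_union hdisj (hS.prod measurableSet_Ioc) h1 h2]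

/-- Let `f : [0,∞)² → ℂ` be locally Lebesgue integrable. If the double
integral converges regularly, then the horizontal strip integrals
`∫₀^{x₁} ∫_y^{y₁} f` have finite limits as `x₁ → ∞`, locally uniformly in `(y, y₁)` with
`y₁ > y ≥ 0`; analogously the vertical strip integrals `∫_x^{x₁} ∫₀^{y₁} f` have finite
limits as `y₁ → ∞`, locally uniformly in `(x, x₁)` with `x₁ > x ≥ 0`. -/
theorem regular_convergence_implies_strip_integrals_converge_locally_uniformly
    (f : ℝ × ℝ → ℂ)
    (hloc : ∀ a₁ b₁ a₂ b₂ : ℝ, 0 ≤ a₁ → 0 ≤ a₂ →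
      IntegrableOn f (Icc a₁ b₁ ×ˢ Icc a₂ b₂))
    (hreg : ∀ ε : ℝ, 0 < ε → ∃ ρ : ℝ, 0 < ρ ∧ ∀ x x₁ y y₁ : ℝ,
      0 ≤ x → x < x₁ → 0 ≤ y → y < y₁ → ρ < max x y →
      ‖∫ p in Ioc x x₁ ×ˢ Ioc y y₁, f p‖ < ε) :
    (∃ H : ℝ → ℝ → ℂ, ∀ c ε : ℝ, 0 < c → 0 < ε → ∃ ρ₃ : ℝ, 0 < ρ₃ ∧
      ∀ y y₁ x₁ : ℝ, 0 ≤ y → y < y₁ → y₁ ≤ c → ρ₃ < x₁ →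
        ‖(∫ p in Ioc (0:ℝ) x₁ ×ˢ Ioc y y₁, f p) - H y y₁‖ < ε) ∧
    (∃ V : ℝ → ℝ → ℂ, ∀ c ε : ℝ, 0 < c → 0 < ε → ∃ ρ₃ : ℝ, 0 < ρ₃ ∧
      ∀ x x₁ y₁ : ℝ, 0 ≤ x → x < x₁ → x₁ ≤ c → ρ₃ < y₁ →
        ‖(∫ p in Ioc x x₁ ×ˢ Ioc (0:ℝ) y₁, f p) - V x x₁‖ < ε) := by
  have hIoc : ∀ a b c d : ℝ, 0 ≤ a → 0 ≤ c → IntegrableOn f (Ioc a b ×ˢ Ioc c d) := by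
    intro a b c d ha hc
    exact (hloc a b c d ha hc).mono_set
      (Set.prod_mono Set.Ioc_subset_Icc_self Set.Ioc_subset_Icc_self)
  constructor
  · -- horizontal
    set u : ℝ → ℝ → ℝ → ℂ := fun y y₁ x₁ => ∫ p in Ioc (0:ℝ) x₁ ×ˢ Ioc y y₁, f p with hu
    have key : ∀ y y₁ x₁ x₂ : ℝ, 0 ≤ y → 0 ≤ x₁ → x₁ ≤ x₂ →
        u y y₁ x₂ - u y y₁ x₁ = ∫ p in Ioc x₁ x₂ ×ˢ Ioc y y₁, f p := by
      intro y y₁ x₁ x₂ hy hx₁ hle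
      rw [hu]
      simp only
      rw [split_left f (Ioc y y₁) 0 x₁ x₂ hx₁ hle (hIoc _ _ _ _ le_rfl hy)
        (hIoc _ _ _ _ hx₁ hy) measurableSet_Ioc]
      ring
    have hcau : ∀ y y₁ : ℝ, 0 ≤ y → CauchySeq (u y y₁) := by
      intro y y₁ hy
      rw [Metric.cauchySeq_iff']
      intro ε hε
      obtain ⟨ρ, hρ, hρ'⟩ := hreg ε hε
      refine ⟨ρ + 1, fun n hn => ?_⟩
      have h1 : (0:ℝ) ≤ ρ + 1 := by linarith
      rw [dist_eq_norm, key y y₁ (ρ + 1) n hy h1 hn]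
      rcases eq_or_lt_of_le hn with h | h
      · subst h; simp [hε]
      rcases le_or_gt y₁ y with hyy | hyy
      · rw [Set.Ioc_eq_empty (not_lt.2 hyy)]; simp [hε]
      exact hρ' _ _ _ _ h1 h hy hyy (lt_max_of_lt_left (by linarith))
    refine ⟨fun y y₁ => limUnder atTop (u y y₁), fun c ε _ hε => ?_⟩
    obtain ⟨ρ, hρ, hρ'⟩ := hreg (ε / 2) (by linarith)
    refine ⟨ρ + 1, by linarith, fun y y₁ x₁ hy hyy _ hx₁ => ?_⟩
    have htend := (hcau y y₁ hy).tendsto_limUnder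
    have hx₁0 : (0:ℝ) ≤ x₁ := by linarith
    have hb : ‖limUnder atTop (u y y₁) - u y y₁ x₁‖ ≤ ε / 2 := by
      have h2 : Tendsto (fun x₂ => ‖u y y₁ x₂ - u y y₁ x₁‖) atTop
          (nhds ‖limUnder atTop (u y y₁) - u y y₁ x₁‖) :=
        ((htend.sub tendsto_const_nhds).norm)
      refine le_of_tendsto h2 ?_
      filter_upwards [eventually_ge_atTop x₁] with x₂ hx₂
      rw [key y y₁ x₁ x₂ hy hx₁0 hx₂]
      rcases eq_or_lt_of_le hx₂ with h | h
      · subst h; simp; linarith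
      exact le_of_lt (hρ' _ _ _ _ hx₁0 h hy hyy (lt_max_of_lt_left (by linarith)))
    calc ‖u y y₁ x₁ - limUnder atTop (u y y₁)‖
        = ‖limUnder atTop (u y y₁) - u y y₁ x₁‖ := norm_sub_rev _ _
      _ ≤ ε / 2 := hb
      _ < ε := by linarith
  · -- vertical
    set u : ℝ → ℝ → ℝ → ℂ := fun x x₁ y₁ => ∫ p in Ioc x x₁ ×ˢ Ioc (0:ℝ) y₁, f p with hu
    have key : ∀ x x₁ y₁ y₂ : ℝ, 0 ≤ x → 0 ≤ y₁ → y₁ ≤ y₂ →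
        u x x₁ y₂ - u x x₁ y₁ = ∫ p in Ioc x x₁ ×ˢ Ioc y₁ y₂, f p := by
      intro x x₁ y₁ y₂ hx hy₁ hle
      rw [hu]
      simp only
      rw [split_right f (Ioc x x₁) 0 y₁ y₂ hy₁ hle (hIoc _ _ _ _ hx le_rfl)
        (hIoc _ _ _ _ hx hy₁) measurableSet_Ioc]
      ring
    have hcau : ∀ x x₁ : ℝ, 0 ≤ x → CauchySeq (u x x₁) := by
      intro x x₁ hx
      rw [Metric.cauchySeq_iff']
      intro ε hε
      obtain ⟨ρ, hρ, hρ'⟩ := hreg ε hε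
      refine ⟨ρ + 1, fun n hn => ?_⟩
      have h1 : (0:ℝ) ≤ ρ + 1 := by linarith
      rw [dist_eq_norm, key x x₁ (ρ + 1) n hx h1 hn]
      rcases eq_or_lt_of_le hn with h | h
      · subst h; simp [hε]
      rcases le_or_gt x₁ x with hxx | hxx
      · rw [Set.Ioc_eq_empty (not_lt.2 hxx)]; simp [hε]
      exact hρ' _ _ _ _ hx hxx h1 h (lt_max_of_lt_right (by linarith))
    refine ⟨fun x x₁ => limUnder atTop (u x x₁), fun c ε _ hε => ?_⟩
    obtain ⟨ρ, hρ, hρ'⟩ := hreg (ε / 2) (by linarith)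
    refine ⟨ρ + 1, by linarith, fun x x₁ y₁ hx hxx _ hy₁ => ?_⟩
    have htend := (hcau x x₁ hx).tendsto_limUnder
    have hy₁0 : (0:ℝ) ≤ y₁ := by linarith
    have hb : ‖limUnder atTop (u x x₁) - u x x₁ y₁‖ ≤ ε / 2 := by
      have h2 : Tendsto (fun y₂ => ‖u x x₁ y₂ - u x x₁ y₁‖) atTop
          (nhds ‖limUnder atTop (u x x₁) - u x x₁ y₁‖) :=
        ((htend.sub tendsto_const_nhds).norm)
      refine le_of_tendsto h2 ?_
      filter_upwards [eventually_ge_atTop y₁] with y₂ hy₂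
      rw [key x x₁ y₁ y₂ hx hy₁0 hy₂]
      rcases eq_or_lt_of_le hy₂ with h | h
      · subst h; simp; linarith
      exact le_of_lt (hρ' _ _ _ _ hx hxx hy₁0 h (lt_max_of_lt_right (by linarith)))
    calc ‖u x x₁ y₁ - limUnder atTop (u x x₁)‖
        = ‖limUnder atTop (u x x₁) - u x x₁ y₁‖ := norm_sub_rev _ _
      _ ≤ ε / 2 := hb
      _ < ε := by linarith
end

section
/- (Theorem 2) Let f : [0,∞)² → ℂ be locally Lebesgue integrable. The double integral ∫₀^∞∫₀^∞ f(u,v) du dv converges regularly if and only if (i) it converges in Pringsheim's sense, and (ii) the finite limit of the 'horizontal strip' integral ∫₀^{x₁} ∫_y^{y₁} f(u,v) du dv as x₁ → ∞ exists locally uniformly in (y, y₁) with y₁ > y ≥ 0 (i.e. for every c > 0, uniformly over 0 ≤ y < y₁ ≤ c), and the finite limit of the 'vertical strip' integral ∫_x^{x₁} ∫₀^{y₁} f(u,v) du dv as y₁ → ∞ exists locally uniformly in (x, x₁) with x₁ > x ≥ 0. -/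
/-!
Only the additivity of `R x x₁ y y₁ = ∫_x^{x₁} ∫_y^{y₁} f` in each pair of endpoints matters, so
the equivalence holds for any such rectangle function with values in a Banach space. Exchanging
the two variables turns vertical strips into horizontal ones, so each half is argued once.

Regular convergence makes the horizontal strip integrals `R 0 x₁ y y₁` (uniformly in `y, y₁`)
and the corner integrals `R 0 x 0 y` Cauchy, and completeness supplies the limits. Conversely,
cut a rectangle far to the right at a height `a` beyond the Pringsheim threshold: above `a` it
is an alternating sum of four corner integrals, all close to `I`; below `a` it is the difference
of two horizontal strip integrals, both close to `H` because the strip limit is uniform for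
heights at most `a`.
-/

open MeasureTheory Set

open Filter Topology

theorem UniformCauchySeqOn.exists_tendstoUniformlyOn {ι α β : Type*} [UniformSpace β]
    [CompleteSpace β] [Nonempty β] {F : ι → α → β} {p : Filter ι} [p.NeBot] {s : Set α}
    (hF : UniformCauchySeqOn F p s) : ∃ f, TendstoUniformlyOn F f p s := by
  have hlim : ∀ x ∈ s, ∃ y, Tendsto (fun i => F i x) p (𝓝 y) := fun x hx =>
    CompleteSpace.complete (hF.cauchy_map hx)
  choose! f hf using hlim
  exact ⟨f, hF.tendstoUniformlyOn_of_tendsto hf⟩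

namespace RectFun

variable {E : Type*} [NormedAddCommGroup E] {R : ℝ → ℝ → ℝ → ℝ → E}

structure IsAdditive (R : ℝ → ℝ → ℝ → ℝ → E) : Prop where
  add_x : ∀ ⦃x m x₁ y y₁ : ℝ⦄, 0 ≤ x → x ≤ m → m ≤ x₁ → 0 ≤ y →
    R x m y y₁ + R m x₁ y y₁ = R x x₁ y y₁
  add_y : ∀ ⦃x x₁ y m y₁ : ℝ⦄, 0 ≤ x → 0 ≤ y → y ≤ m → m ≤ y₁ →
    R x x₁ y m + R x x₁ m y₁ = R x x₁ y y₁

def transpose (R : ℝ → ℝ → ℝ → ℝ → E) : ℝ → ℝ → ℝ → ℝ → E :=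
  fun y y₁ x x₁ => R x x₁ y y₁

def RegularlyConvergent (R : ℝ → ℝ → ℝ → ℝ → E) : Prop :=
  ∀ ε : ℝ, 0 < ε → ∃ ρ : ℝ, 0 < ρ ∧ ∀ x x₁ y y₁ : ℝ,
    0 ≤ x → x < x₁ → 0 ≤ y → y < y₁ → ρ < max x y → ‖R x x₁ y y₁‖ < ε

def PringsheimLimit (R : ℝ → ℝ → ℝ → ℝ → E) (I : E) : Prop :=
  ∀ ε : ℝ, 0 < ε → ∃ ρ : ℝ, 0 < ρ ∧ ∀ x y : ℝ, ρ < x → ρ < y → ‖R 0 x 0 y - I‖ < ε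

def HorizontalStripLimit (R : ℝ → ℝ → ℝ → ℝ → E) (H : ℝ → ℝ → E) : Prop :=
  ∀ c ε : ℝ, 0 < c → 0 < ε → ∃ ρ : ℝ, 0 < ρ ∧ ∀ y y₁ x₁ : ℝ,
    0 ≤ y → y < y₁ → y₁ ≤ c → ρ < x₁ → ‖R 0 x₁ y y₁ - H y y₁‖ < ε

theorem IsAdditive.transpose (hR : IsAdditive R) : IsAdditive (transpose R) :=
  ⟨fun _ _ _ _ _ hy hm hm' hx => hR.add_y hx hy hm hm',
    fun _ _ _ _ _ hy hx hm hm' => hR.add_x hx hm hm' hy⟩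

theorem RegularlyConvergent.transpose (h : RegularlyConvergent R) :
    RegularlyConvergent (transpose R) := fun ε hε =>
  (h ε hε).imp fun _ ⟨hρ, h⟩ => ⟨hρ, fun y y₁ x x₁ hy hyy₁ hx hxx₁ hmax =>
    h x x₁ y y₁ hx hxx₁ hy hyy₁ (max_comm y x ▸ hmax)⟩

theorem PringsheimLimit.transpose {I : E} (h : PringsheimLimit R I) :
    PringsheimLimit (transpose R) I := fun ε hε =>
  (h ε hε).imp fun _ ⟨hρ, h⟩ => ⟨hρ, fun y x hy hx => h x y hx hy⟩

theorem IsAdditive.sub_x (hR : IsAdditive R) {x m x₁ y y₁ : ℝ} (hx : 0 ≤ x) (hm : x ≤ m)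
    (hm₁ : m ≤ x₁) (hy : 0 ≤ y) : R x x₁ y y₁ - R x m y y₁ = R m x₁ y y₁ := by
  rw [← hR.add_x hx hm hm₁ hy, add_sub_cancel_left]

theorem RegularlyConvergent.horizontalStrip_cauchy (h : RegularlyConvergent R)
    (hR : IsAdditive R) {ε : ℝ} (hε : 0 < ε) : ∃ ρ : ℝ, 0 < ρ ∧ ∀ s t y y₁ : ℝ,
      ρ < s → ρ < t → 0 ≤ y → y < y₁ → ‖R 0 s y y₁ - R 0 t y y₁‖ < ε := by
  obtain ⟨ρ, hρ, h⟩ := h ε hε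
  refine ⟨ρ, hρ, fun s t y y₁ hs ht hy hyy₁ => ?_⟩
  wlog hst : s ≤ t generalizing s t
  · rw [norm_sub_rev]
    exact this t s ht hs (le_of_not_ge hst)
  rcases hst.eq_or_lt with rfl | hst
  · simpa using hε
  rw [norm_sub_rev, hR.sub_x le_rfl (hρ.trans hs).le hst.le hy]
  exact h s t y y₁ (hρ.trans hs).le hst hy hyy₁ (hs.trans_le (le_max_left _ _))

theorem RegularlyConvergent.exists_horizontalStripLimit [CompleteSpace E]
    (h : RegularlyConvergent R) (hR : IsAdditive R) : ∃ H, HorizontalStripLimit R H := by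
  obtain ⟨H, hH⟩ : ∃ H, TendstoUniformlyOn (fun x₁ (p : ℝ × ℝ) => R 0 x₁ p.1 p.2) H atTop
      {p | 0 ≤ p.1 ∧ p.1 < p.2} := by
    refine UniformCauchySeqOn.exists_tendstoUniformlyOn
      (Metric.uniformCauchySeqOn_iff.2 fun ε hε => ?_)
    obtain ⟨ρ, -, hρ⟩ := h.horizontalStrip_cauchy hR hε
    exact ⟨ρ + 1, fun s hs t ht p hp => by
      rw [dist_eq_norm]
      exact hρ s t _ _ (by linarith) (by linarith) hp.1 hp.2⟩
  refine ⟨fun y y₁ => H (y, y₁), fun _ ε _ hε => ?_⟩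
  obtain ⟨ρ, hρ, hH⟩ :=
    (atTop_basis_Ioi' 0).eventually_iff.1 (Metric.tendstoUniformlyOn_iff.1 hH ε hε)
  refine ⟨ρ, hρ, fun y y₁ x₁ hy hyy₁ _ hx₁ => ?_⟩
  rw [← dist_eq_norm, dist_comm]
  exact hH hx₁ (y, y₁) ⟨hy, hyy₁⟩

theorem RegularlyConvergent.exists_pringsheimLimit [CompleteSpace E]
    (h : RegularlyConvergent R) (hR : IsAdditive R) : ∃ I, PringsheimLimit R I := by
  obtain ⟨I, hI⟩ := cauchySeq_tendsto_of_complete (u := fun p : ℝ × ℝ => R 0 p.1 0 p.2) <|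
    Metric.cauchySeq_iff.2 fun ε hε => by
      obtain ⟨ρ, hρ, hx⟩ := h.horizontalStrip_cauchy hR (half_pos hε)
      obtain ⟨ρ', hρ', hy⟩ := h.transpose.horizontalStrip_cauchy hR.transpose (half_pos hε)
      refine ⟨(max ρ ρ' + 1, max ρ ρ' + 1), fun ⟨m₁, m₂⟩ hm ⟨n₁, n₂⟩ hn => ?_⟩
      obtain ⟨hm₁, hm₂⟩ := Prod.mk_le_mk.1 hm
      obtain ⟨hn₁, hn₂⟩ := Prod.mk_le_mk.1 hn
      have hρmax := le_max_left ρ ρ'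
      have hρ'max := le_max_right ρ ρ'
      calc dist (R 0 m₁ 0 m₂) (R 0 n₁ 0 n₂)
          ≤ dist (R 0 m₁ 0 m₂) (R 0 n₁ 0 m₂) + dist (R 0 n₁ 0 m₂) (R 0 n₁ 0 n₂) :=
            dist_triangle _ _ _
        _ < ε / 2 + ε / 2 := by
            rw [dist_eq_norm, dist_eq_norm]
            exact add_lt_add (hx m₁ n₁ 0 m₂ (by linarith) (by linarith) le_rfl (by linarith))
              (hy m₂ n₂ 0 n₁ (by linarith) (by linarith) le_rfl (by linarith))
        _ = ε := add_halves ε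
  refine ⟨I, fun ε hε => ?_⟩
  rw [← prod_atTop_atTop_eq] at hI
  obtain ⟨ρ, hρ, hI⟩ :=
    ((atTop_basis_Ioi' 0).prod_self.tendsto_iff Metric.nhds_basis_ball).1 hI ε hε
  exact ⟨ρ, hρ, fun x y hx hy => by simpa [dist_eq_norm] using hI (x, y) ⟨hx, hy⟩⟩

theorem IsAdditive.norm_lt_of_strip (hR : IsAdditive R) {ρ δ v v₁ : ℝ} {h : E} (hρ : 0 ≤ ρ)
    (hv : 0 ≤ v) (hh : ∀ x₁, ρ < x₁ → ‖R 0 x₁ v v₁ - h‖ < δ) {u u₁ : ℝ} (hu : ρ < u)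
    (huu₁ : u ≤ u₁) : ‖R u u₁ v v₁‖ < 2 * δ := by
  rw [← hR.sub_x le_rfl (hρ.trans hu.le) huu₁ hv, ← dist_eq_norm]
  calc dist (R 0 u₁ v v₁) (R 0 u v v₁) ≤ dist (R 0 u₁ v v₁) h + dist (R 0 u v v₁) h :=
        dist_triangle_right _ _ _
    _ < δ + δ := by
        rw [dist_eq_norm, dist_eq_norm]
        exact add_lt_add (hh u₁ (hu.trans_le huu₁)) (hh u hu)
    _ = 2 * δ := (two_mul δ).symm

theorem IsAdditive.norm_lt_of_corner (hR : IsAdditive R) {ρ δ : ℝ} {I : E} (hρ : 0 ≤ ρ)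
    (hI : ∀ x y, ρ < x → ρ < y → ‖R 0 x 0 y - I‖ < δ) {u u₁ v v₁ : ℝ} (hu : ρ < u)
    (huu₁ : u ≤ u₁) (hv : ρ < v) (hvv₁ : v ≤ v₁) : ‖R u u₁ v v₁‖ < 4 * δ := by
  have hcolumn : ∀ x, ρ < x → ‖R 0 x v v₁‖ < 2 * δ := fun x hx =>
    hR.transpose.norm_lt_of_strip hρ le_rfl (fun y hy => hI x y hx hy) hv hvv₁
  rw [← hR.sub_x le_rfl (hρ.trans hu.le) huu₁ (hρ.trans hv.le)]
  calc _ ≤ ‖R 0 u₁ v v₁‖ + ‖R 0 u v v₁‖ := norm_sub_le _ _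
    _ < 2 * δ + 2 * δ := add_lt_add (hcolumn u₁ (hu.trans_le huu₁)) (hcolumn u hu)
    _ = 4 * δ := by ring

theorem PringsheimLimit.exists_norm_lt_of_lt_left {I : E} {H : ℝ → ℝ → E}
    (hI : PringsheimLimit R I) (hH : HorizontalStripLimit R H) (hR : IsAdditive R) {ε : ℝ}
    (hε : 0 < ε) : ∃ ρ : ℝ, 0 < ρ ∧ ∀ x x₁ y y₁ : ℝ,
      ρ < x → x < x₁ → 0 ≤ y → y < y₁ → ‖R x x₁ y y₁‖ < ε := by
  obtain ⟨ρ₁, hρ₁, hI⟩ := hI (ε / 8) (by positivity)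
  obtain ⟨a, hρ₁a⟩ := exists_gt ρ₁
  obtain ⟨ρ₂, hρ₂, hH⟩ := hH a (ε / 4) (hρ₁.trans hρ₁a) (by positivity)
  have far : ∀ {u u₁ v v₁ : ℝ}, ρ₁ < u → u ≤ u₁ → ρ₁ < v → v ≤ v₁ → ‖R u u₁ v v₁‖ < ε / 2 :=
    fun hu huu₁ hv hvv₁ => by linarith [hR.norm_lt_of_corner hρ₁.le hI hu huu₁ hv hvv₁]
  have low : ∀ {u u₁ v v₁ : ℝ}, ρ₂ < u → u ≤ u₁ → 0 ≤ v → v < v₁ → v₁ ≤ a →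
      ‖R u u₁ v v₁‖ < ε / 2 := fun hu huu₁ hv hvv₁ hv₁ => by
    linarith [hR.norm_lt_of_strip hρ₂.le hv (hH _ _ · hv hvv₁ hv₁) hu huu₁]
  refine ⟨max ρ₂ a, lt_max_of_lt_left hρ₂, fun x x₁ y y₁ hx hxx₁ hy hyy₁ => ?_⟩
  have hρ₂x : ρ₂ < x := (le_max_left _ _).trans_lt hx
  have hρ₁x : ρ₁ < x := hρ₁a.trans ((le_max_right _ _).trans_lt hx)
  rcases le_or_gt y₁ a with hy₁a | hay₁
  · linarith [low hρ₂x hxx₁.le hy hyy₁ hy₁a]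
  rcases le_or_gt a y with hay | hya
  · linarith [far hρ₁x hxx₁.le (hρ₁a.trans_le hay) hyy₁.le]
  rw [← hR.add_y (hρ₂.trans hρ₂x).le hy hya.le hay₁.le]
  calc _ ≤ ‖R x x₁ y a‖ + ‖R x x₁ a y₁‖ := norm_add_le _ _
    _ < ε / 2 + ε / 2 := add_lt_add (low hρ₂x hxx₁.le hy hya le_rfl)
        (far hρ₁x hxx₁.le hρ₁a hay₁.le)
    _ = ε := add_halves ε

theorem regularlyConvergent_iff [CompleteSpace E] (hR : IsAdditive R) :
    RegularlyConvergent R ↔ (∃ I, PringsheimLimit R I) ∧ (∃ H, HorizontalStripLimit R H) ∧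
      ∃ V, HorizontalStripLimit (transpose R) V := by
  refine ⟨fun h => ⟨h.exists_pringsheimLimit hR, h.exists_horizontalStripLimit hR,
    h.transpose.exists_horizontalStripLimit hR.transpose⟩, ?_⟩
  rintro ⟨⟨I, hI⟩, ⟨H, hH⟩, ⟨V, hV⟩⟩ ε hε
  obtain ⟨ρ₁, hρ₁, h₁⟩ := hI.exists_norm_lt_of_lt_left hH hR hε
  obtain ⟨ρ₂, hρ₂, h₂⟩ := hI.transpose.exists_norm_lt_of_lt_left hV hR.transpose hε
  refine ⟨max ρ₁ ρ₂, by positivity, fun x x₁ y y₁ hx hxx₁ hy hyy₁ hmax => ?_⟩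
  rcases lt_max_iff.1 hmax with hρx | hρy
  · exact h₁ x x₁ y y₁ ((le_max_left _ _).trans_lt hρx) hxx₁ hy hyy₁
  · exact h₂ y y₁ x x₁ ((le_max_right _ _).trans_lt hρy) hyy₁ hx hxx₁

theorem isAdditive_setIntegral [NormedSpace ℝ E] {f : ℝ × ℝ → E}
    (hf : ∀ x y : ℝ, IntegrableOn f (Ioc 0 x ×ˢ Ioc 0 y)) :
    IsAdditive fun x x₁ y y₁ => ∫ p in Ioc x x₁ ×ˢ Ioc y y₁, f p := by
  have hrect : ∀ ⦃x x₁ y y₁ : ℝ⦄, 0 ≤ x → 0 ≤ y → IntegrableOn f (Ioc x x₁ ×ˢ Ioc y y₁) :=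
    fun x x₁ y y₁ hx hy =>
      (hf x₁ y₁).mono_set (prod_mono (Ioc_subset_Ioc_left hx) (Ioc_subset_Ioc_left hy))
  constructor
  · intro x m x₁ y y₁ hx hm hm₁ hy
    rw [← setIntegral_union ((Ioc_disjoint_Ioc_of_le le_rfl).set_prod_left _ _)
      (measurableSet_Ioc.prod measurableSet_Ioc) (hrect hx hy) (hrect (hx.trans hm) hy),
      ← union_prod, Ioc_union_Ioc_eq_Ioc hm hm₁]
  · intro x x₁ y m y₁ hx hy hm hm₁
    rw [← setIntegral_union ((Ioc_disjoint_Ioc_of_le le_rfl).set_prod_right _ _)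
      (measurableSet_Ioc.prod measurableSet_Ioc) (hrect hx hy) (hrect hx (hy.trans hm)),
      ← prod_union, Ioc_union_Ioc_eq_Ioc hm hm₁]

end RectFun

/-- **Theorem 2.** Let `f : [0,∞)² → ℂ` be locally Lebesgue integrable. The
double integral `∫₀^∞∫₀^∞ f` converges regularly if and only if (i) it converges in
Pringsheim's sense, and (ii) the horizontal strip integrals `∫₀^{x₁} ∫_y^{y₁} f` have finite
limits as `x₁ → ∞` locally uniformly in `(y, y₁)` with `y₁ > y ≥ 0`, and the vertical strip
integrals `∫_x^{x₁} ∫₀^{y₁} f` have finite limits as `y₁ → ∞` locally uniformly in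
`(x, x₁)` with `x₁ > x ≥ 0`. -/
theorem regular_convergence_iff_pringsheim_and_strips (f : ℝ × ℝ → ℂ)
    (hloc : ∀ a₁ b₁ a₂ b₂ : ℝ, 0 ≤ a₁ → 0 ≤ a₂ →
      IntegrableOn f (Icc a₁ b₁ ×ˢ Icc a₂ b₂)) :
    (∀ ε : ℝ, 0 < ε → ∃ ρ : ℝ, 0 < ρ ∧ ∀ x x₁ y y₁ : ℝ,
      0 ≤ x → x < x₁ → 0 ≤ y → y < y₁ → ρ < max x y →
      ‖∫ p in Ioc x x₁ ×ˢ Ioc y y₁, f p‖ < ε) ↔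
    ((∃ I : ℂ, ∀ ε : ℝ, 0 < ε → ∃ ρ : ℝ, 0 < ρ ∧ ∀ x y : ℝ, ρ < x → ρ < y →
        ‖(∫ p in Ioc (0:ℝ) x ×ˢ Ioc (0:ℝ) y, f p) - I‖ < ε) ∧
      (∃ H : ℝ → ℝ → ℂ, ∀ c ε : ℝ, 0 < c → 0 < ε → ∃ ρ₃ : ℝ, 0 < ρ₃ ∧
        ∀ y y₁ x₁ : ℝ, 0 ≤ y → y < y₁ → y₁ ≤ c → ρ₃ < x₁ →
          ‖(∫ p in Ioc (0:ℝ) x₁ ×ˢ Ioc y y₁, f p) - H y y₁‖ < ε) ∧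
      (∃ V : ℝ → ℝ → ℂ, ∀ c ε : ℝ, 0 < c → 0 < ε → ∃ ρ₃ : ℝ, 0 < ρ₃ ∧
        ∀ x x₁ y₁ : ℝ, 0 ≤ x → x < x₁ → x₁ ≤ c → ρ₃ < y₁ →
          ‖(∫ p in Ioc x x₁ ×ˢ Ioc (0:ℝ) y₁, f p) - V x x₁‖ < ε)) :=
  RectFun.regularlyConvergent_iff <| RectFun.isAdditive_setIntegral fun x y =>
    (hloc 0 x 0 y le_rfl le_rfl).mono_set (prod_mono Ioc_subset_Icc_self Ioc_subset_Icc_self)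
end

section
/- (Theorem 3, main result) Let f : [0,∞)² → ℂ be locally Lebesgue integrable and suppose the double integral ∫₀^∞∫₀^∞ f(u,v) du dv converges regularly. Then the finite limits I₁(A) := lim_{y→∞} ∫₀^A (∫₀^y f(u,v) dv) du and I₂(B) := lim_{x→∞} ∫₀^B (∫₀^x f(u,v) du) dv exist uniformly in A ∈ (0,∞) and B ∈ (0,∞), respectively; and lim_{A→∞} I₁(A) = lim_{B→∞} I₂(B) = I, where I is the sum of the double integral in Pringsheim's sense, i.e. I = lim_{A,B→∞} ∫₀^A ∫₀^B f(u,v) du dv. -/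
open MeasureTheory Set Filter

/-- **Theorem 3, main result.** Let `f : [0,∞)² → ℂ` be locally Lebesgue
integrable and suppose the double integral `∫₀^∞∫₀^∞ f` converges regularly. Then the
finite limits `I₁(A) = lim_{y→∞} ∫₀^A (∫₀^y f(u,v) dv) du` and
`I₂(B) = lim_{x→∞} ∫₀^B (∫₀^x f(u,v) du) dv` exist uniformly in `A > 0` and `B > 0`
respectively, and `lim_{A→∞} I₁(A) = lim_{B→∞} I₂(B) = I`, where `I` is the Pringsheim sum
of the double integral. -/
theorem generalized_fubini (f : ℝ × ℝ → ℂ)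
    (hloc : ∀ a₁ b₁ a₂ b₂ : ℝ, 0 ≤ a₁ → 0 ≤ a₂ →
      IntegrableOn f (Icc a₁ b₁ ×ˢ Icc a₂ b₂))
    (hreg : ∀ ε : ℝ, 0 < ε → ∃ ρ : ℝ, 0 < ρ ∧ ∀ x x₁ y y₁ : ℝ,
      0 ≤ x → x < x₁ → 0 ≤ y → y < y₁ → ρ < max x y →
      ‖∫ p in Ioc x x₁ ×ˢ Ioc y y₁, f p‖ < ε) :
    ∃ I₁ I₂ : ℝ → ℂ, ∃ I : ℂ,
      (∀ ε : ℝ, 0 < ε → ∃ ρ : ℝ, 0 < ρ ∧ ∀ A y : ℝ, 0 < A → ρ < y →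
        ‖(∫ u in Ioc (0:ℝ) A, ∫ v in Ioc (0:ℝ) y, f (u, v)) - I₁ A‖ ≤ ε) ∧
      (∀ ε : ℝ, 0 < ε → ∃ ρ : ℝ, 0 < ρ ∧ ∀ B x : ℝ, 0 < B → ρ < x →
        ‖(∫ v in Ioc (0:ℝ) B, ∫ u in Ioc (0:ℝ) x, f (u, v)) - I₂ B‖ ≤ ε) ∧
      (∀ ε : ℝ, 0 < ε → ∃ ρ : ℝ, 0 < ρ ∧ ∀ A B : ℝ, ρ < A → ρ < B →
        ‖(∫ p in Ioc (0:ℝ) A ×ˢ Ioc (0:ℝ) B, f p) - I‖ < ε) ∧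
      Tendsto I₁ atTop (nhds I) ∧ Tendsto I₂ atTop (nhds I) := by
  classical
  set F : ℝ → ℝ → ℂ := fun A B => ∫ p in Ioc (0:ℝ) A ×ˢ Ioc (0:ℝ) B, f p with hF
  have hInt : ∀ a b a' b' : ℝ, 0 ≤ a → 0 ≤ a' →
      IntegrableOn f (Ioc a b ×ˢ Ioc a' b') := by
    intro a b a' b' ha ha'
    exact (hloc a b a' b' ha ha').mono_set
      (prod_mono Ioc_subset_Icc_self Ioc_subset_Icc_self)
  -- additivity in the second variable
  have haddB : ∀ A y y₁ : ℝ, 0 ≤ y → y ≤ y₁ →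
      F A y₁ - F A y = ∫ p in Ioc (0:ℝ) A ×ˢ Ioc y y₁, f p := by
    intro A y y₁ hy hyy
    have hsplit : Ioc (0:ℝ) y₁ = Ioc 0 y ∪ Ioc y y₁ := (Ioc_union_Ioc_eq_Ioc hy hyy).symm
    have hdisj : Disjoint (Ioc (0:ℝ) A ×ˢ Ioc (0:ℝ) y) (Ioc (0:ℝ) A ×ˢ Ioc y y₁) := by
      refine Set.disjoint_left.2 ?_
      rintro ⟨u, v⟩ ⟨_, hv⟩ ⟨_, hv'⟩
      exact absurd hv'.1 (not_lt.2 hv.2)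
    have h1 : F A y₁ = F A y + ∫ p in Ioc (0:ℝ) A ×ˢ Ioc y y₁, f p := by
      rw [hF]
      simp only
      rw [hsplit, prod_union]
      exact setIntegral_union hdisj (measurableSet_Ioc.prod measurableSet_Ioc)
        (hInt 0 A 0 y le_rfl le_rfl) (hInt 0 A y y₁ le_rfl hy)
    rw [h1]; ring
  -- additivity in the first variable
  have haddA : ∀ x x₁ B : ℝ, 0 ≤ x → x ≤ x₁ →
      F x₁ B - F x B = ∫ p in Ioc x x₁ ×ˢ Ioc (0:ℝ) B, f p := by
    intro x x₁ B hx hxx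
    have hsplit : Ioc (0:ℝ) x₁ = Ioc 0 x ∪ Ioc x x₁ := (Ioc_union_Ioc_eq_Ioc hx hxx).symm
    have hdisj : Disjoint (Ioc (0:ℝ) x ×ˢ Ioc (0:ℝ) B) (Ioc x x₁ ×ˢ Ioc (0:ℝ) B) := by
      refine Set.disjoint_left.2 ?_
      rintro ⟨u, v⟩ ⟨hu, _⟩ ⟨hu', _⟩
      exact absurd hu'.1 (not_lt.2 hu.2)
    have h1 : F x₁ B = F x B + ∫ p in Ioc x x₁ ×ˢ Ioc (0:ℝ) B, f p := by
      rw [hF]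
      simp only
      rw [hsplit, union_prod]
      exact setIntegral_union hdisj (measurableSet_Ioc.prod measurableSet_Ioc)
        (hInt 0 x 0 B le_rfl le_rfl) (hInt x x₁ 0 B hx le_rfl)
    rw [h1]; ring
  -- key estimate in the second variable (any A)
  have key1 : ∀ ε : ℝ, 0 < ε → ∃ ρ : ℝ, 0 < ρ ∧ ∀ A y y₁ : ℝ, 0 ≤ y → y < y₁ → ρ < y →
      ‖F A y₁ - F A y‖ < ε := by
    intro ε hε
    obtain ⟨ρ, hρ, hρ'⟩ := hreg ε hε
    refine ⟨ρ, hρ, fun A y y₁ hy hyy hρy => ?_⟩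
    rw [haddB A y y₁ hy hyy.le]
    rcases le_or_gt A 0 with hA | hA
    · rw [Ioc_eq_empty (not_lt.2 hA)]
      simpa using hε
    · have := hρ' 0 A y y₁ le_rfl hA hy hyy (by simpa [max_eq_right hy] using hρy)
      simpa using this
  -- key estimate in the first variable (any B)
  have key2 : ∀ ε : ℝ, 0 < ε → ∃ ρ : ℝ, 0 < ρ ∧ ∀ B x x₁ : ℝ, 0 ≤ x → x < x₁ → ρ < x →
      ‖F x₁ B - F x B‖ < ε := by
    intro ε hε
    obtain ⟨ρ, hρ, hρ'⟩ := hreg ε hε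
    refine ⟨ρ, hρ, fun B x x₁ hx hxx hρx => ?_⟩
    rw [haddA x x₁ B hx hxx.le]
    rcases le_or_gt B 0 with hB | hB
    · rw [Ioc_eq_empty (not_lt.2 hB)]
      simpa using hε
    · have := hρ' x x₁ 0 B hx hxx le_rfl hB (by simpa [max_eq_left hx] using hρx)
      simpa using this
  -- existence of I₁
  have hex1 : ∀ A : ℝ, ∃ L : ℂ, Tendsto (fun y => F A y) atTop (nhds L) := by
    intro A
    apply cauchySeq_tendsto_of_complete
    rw [Metric.cauchySeq_iff]
    intro ε hε
    obtain ⟨ρ, hρ, hρ'⟩ := key1 ε hε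
    refine ⟨ρ + 1, fun m hm n hn => ?_⟩
    rcases le_total m n with h | h
    · rcases h.lt_or_eq with h | h
      · rw [dist_eq_norm, norm_sub_rev]
        exact hρ' A m n (by linarith) h (by linarith)
      · simpa [h] using hε
    · rcases h.lt_or_eq with h | h
      · rw [dist_eq_norm]
        exact hρ' A n m (by linarith) h (by linarith)
      · simpa [h] using hε
  choose I₁ hI₁ using hex1
  have hex2 : ∀ B : ℝ, ∃ L : ℂ, Tendsto (fun x => F x B) atTop (nhds L) := by
    intro B
    apply cauchySeq_tendsto_of_complete
    rw [Metric.cauchySeq_iff]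
    intro ε hε
    obtain ⟨ρ, hρ, hρ'⟩ := key2 ε hε
    refine ⟨ρ + 1, fun m hm n hn => ?_⟩
    rcases le_total m n with h | h
    · rcases h.lt_or_eq with h | h
      · rw [dist_eq_norm, norm_sub_rev]
        exact hρ' B m n (by linarith) h (by linarith)
      · simpa [h] using hε
    · rcases h.lt_or_eq with h | h
      · rw [dist_eq_norm]
        exact hρ' B n m (by linarith) h (by linarith)
      · simpa [h] using hε
  choose I₂ hI₂ using hex2
  -- the diagonal sequence converges; its limit is the Pringsheim sum
  have hexI : ∃ I : ℂ, Tendsto (fun n : ℕ => F n n) atTop (nhds I) := by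
    apply cauchySeq_tendsto_of_complete
    rw [Metric.cauchySeq_iff]
    intro ε hε
    obtain ⟨ρ₁, hρ₁, hρ₁'⟩ := key1 (ε / 2) (by linarith)
    obtain ⟨ρ₂, hρ₂, hρ₂'⟩ := key2 (ε / 2) (by linarith)
    obtain ⟨N, hN⟩ := exists_nat_gt (max ρ₁ ρ₂)
    refine ⟨N + 1, fun m hm n hn => ?_⟩
    have key : ∀ m n : ℕ, N + 1 ≤ m → m < n → dist (F m m) (F n n) < ε := by
      intro m n hm hmn
      have hm0 : (0:ℝ) ≤ m := Nat.cast_nonneg m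
      have hmncast : (m : ℝ) < n := by exact_mod_cast hmn
      have hmN : (max ρ₁ ρ₂ : ℝ) < m := by
        have : (N : ℝ) < m := by exact_mod_cast hm
        linarith [hN]
      have h1 : ‖F n (m:ℝ) - F m (m:ℝ)‖ < ε / 2 :=
        hρ₂' m m n hm0 hmncast (lt_of_le_of_lt (le_max_right _ _) hmN)
      have h2 : ‖F n (n:ℝ) - F n (m:ℝ)‖ < ε / 2 :=
        hρ₁' n m n hm0 hmncast (lt_of_le_of_lt (le_max_left _ _) hmN)
      have : dist (F m m) (F n n) ≤ ‖F n (m:ℝ) - F m (m:ℝ)‖ + ‖F n (n:ℝ) - F n (m:ℝ)‖ := by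
        rw [dist_eq_norm]
        calc ‖F m (m:ℝ) - F n (n:ℝ)‖
            = ‖-(F n (m:ℝ) - F m (m:ℝ)) + -(F n (n:ℝ) - F n (m:ℝ))‖ := by ring_nf
          _ ≤ ‖-(F n (m:ℝ) - F m (m:ℝ))‖ + ‖-(F n (n:ℝ) - F n (m:ℝ))‖ := norm_add_le _ _
          _ = ‖F n (m:ℝ) - F m (m:ℝ)‖ + ‖F n (n:ℝ) - F n (m:ℝ)‖ := by
              rw [norm_neg, norm_neg]
      linarith
    rcases lt_trichotomy m n with h | h | h
    · exact key m n hm h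
    · simp [h, hε]
    · rw [dist_comm]; exact key n m hn h
  obtain ⟨I, hGI⟩ := hexI
  -- Pringsheim convergence to I
  have hPr : ∀ ε : ℝ, 0 < ε → ∃ ρ : ℝ, 0 < ρ ∧ ∀ A B : ℝ, ρ < A → ρ < B →
      ‖F A B - I‖ < ε := by
    intro ε hε
    obtain ⟨ρ₁, hρ₁, hρ₁'⟩ := key1 (ε / 4) (by linarith)
    obtain ⟨ρ₂, hρ₂, hρ₂'⟩ := key2 (ε / 4) (by linarith)
    refine ⟨max ρ₁ ρ₂, lt_max_of_lt_left hρ₁, fun A B hA hB => ?_⟩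
    have hA0 : (0:ℝ) < A := ((hρ₁.trans_le (le_max_left ρ₁ ρ₂)).trans hA)
    have hB0 : (0:ℝ) < B := ((hρ₁.trans_le (le_max_left ρ₁ ρ₂)).trans hB)
    -- choose n large
    obtain ⟨N₀, hN₀⟩ := (Metric.tendsto_atTop.1 hGI) (ε / 4) (by linarith)
    obtain ⟨n₁, hn₁⟩ := exists_nat_gt (max A B)
    set n : ℕ := max N₀ n₁ with hn
    have hnA : A < (n : ℝ) := lt_of_le_of_lt (le_max_left A B) (lt_of_lt_of_le hn₁
      (by exact_mod_cast Nat.le_max_right N₀ n₁))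
    have hnB : B < (n : ℝ) := lt_of_le_of_lt (le_max_right A B) (lt_of_lt_of_le hn₁
      (by exact_mod_cast Nat.le_max_right N₀ n₁))
    have hGn : ‖F n (n:ℝ) - I‖ < ε / 4 := by
      have := hN₀ n (Nat.le_max_left N₀ n₁)
      rwa [dist_eq_norm] at this
    have h1 : ‖F (n:ℝ) B - F A B‖ < ε / 4 :=
      hρ₂' B A n hA0.le hnA (lt_of_le_of_lt (le_max_right ρ₁ ρ₂) hA)
    have h2 : ‖F (n:ℝ) (n:ℝ) - F (n:ℝ) B‖ < ε / 4 :=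
      hρ₁' n B n hB0.le hnB (lt_of_le_of_lt (le_max_left ρ₁ ρ₂) hB)
    have : ‖F A B - I‖ ≤ ‖F (n:ℝ) B - F A B‖ + ‖F (n:ℝ) (n:ℝ) - F (n:ℝ) B‖
        + ‖F (n:ℝ) (n:ℝ) - I‖ := by
      calc ‖F A B - I‖
          = ‖-(F (n:ℝ) B - F A B) + -(F (n:ℝ) (n:ℝ) - F (n:ℝ) B) + (F (n:ℝ) (n:ℝ) - I)‖ := by
            ring_nf
        _ ≤ ‖-(F (n:ℝ) B - F A B) + -(F (n:ℝ) (n:ℝ) - F (n:ℝ) B)‖ + ‖F (n:ℝ) (n:ℝ) - I‖ :=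
            norm_add_le _ _
        _ ≤ ‖-(F (n:ℝ) B - F A B)‖ + ‖-(F (n:ℝ) (n:ℝ) - F (n:ℝ) B)‖ + ‖F (n:ℝ) (n:ℝ) - I‖ := by
            gcongr; exact norm_add_le _ _
        _ = _ := by rw [norm_neg, norm_neg]
    linarith
  -- rewrite iterated integrals
  have hiter1 : ∀ A y : ℝ, (∫ u in Ioc (0:ℝ) A, ∫ v in Ioc (0:ℝ) y, f (u, v)) = F A y := by
    intro A y
    have hi := hInt 0 A 0 y le_rfl le_rfl
    rw [hF]
    simp only
    rw [show (volume : Measure (ℝ × ℝ)) = (volume : Measure ℝ).prod volume from rfl] at hi ⊢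
    exact (setIntegral_prod f hi).symm
  have hiter2 : ∀ x B : ℝ, (∫ v in Ioc (0:ℝ) B, ∫ u in Ioc (0:ℝ) x, f (u, v)) = F x B := by
    intro x B
    have hi := hInt 0 x 0 B le_rfl le_rfl
    rw [hF]
    simp only
    rw [show (volume : Measure (ℝ × ℝ)) = (volume : Measure ℝ).prod volume from rfl]
    rw [← Measure.prod_restrict]
    rw [IntegrableOn,
      show (volume : Measure (ℝ × ℝ)) = (volume : Measure ℝ).prod volume from rfl,
      ← Measure.prod_restrict] at hi
    exact (integral_prod_symm f hi).symm
  refine ⟨I₁, I₂, I, ?_, ?_, ?_, ?_, ?_⟩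
  · -- uniform existence of I₁
    intro ε hε
    obtain ⟨ρ, hρ, hρ'⟩ := key1 ε hε
    refine ⟨ρ, hρ, fun A y hA hρy => ?_⟩
    rw [hiter1]
    have htend : Tendsto (fun y₁ => ‖F A y - F A y₁‖) atTop (nhds ‖F A y - I₁ A‖) :=
      ((tendsto_const_nhds.sub (hI₁ A)).norm)
    refine le_of_tendsto htend ?_
    filter_upwards [eventually_gt_atTop y] with y₁ hy₁
    rw [norm_sub_rev]
    exact (hρ' A y y₁ (le_of_lt (hρ.trans hρy)) hy₁ hρy).le
  · -- uniform existence of I₂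
    intro ε hε
    obtain ⟨ρ, hρ, hρ'⟩ := key2 ε hε
    refine ⟨ρ, hρ, fun B x hB hρx => ?_⟩
    rw [hiter2]
    have htend : Tendsto (fun x₁ => ‖F x B - F x₁ B‖) atTop (nhds ‖F x B - I₂ B‖) :=
      ((tendsto_const_nhds.sub (hI₂ B)).norm)
    refine le_of_tendsto htend ?_
    filter_upwards [eventually_gt_atTop x] with x₁ hx₁
    rw [norm_sub_rev]
    exact (hρ' B x x₁ (le_of_lt (hρ.trans hρx)) hx₁ hρx).le
  · -- Pringsheim
    exact hPr
  · -- Tendsto I₁ atTop (nhds I)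
    rw [Metric.tendsto_atTop]
    intro ε hε
    obtain ⟨ρ, hρ, hρ'⟩ := hPr (ε / 2) (by linarith)
    refine ⟨ρ + 1, fun A hA => ?_⟩
    have hbound : ‖I₁ A - I‖ ≤ ε / 2 := by
      have htend : Tendsto (fun B => ‖F A B - I‖) atTop (nhds ‖I₁ A - I‖) :=
        (((hI₁ A).sub tendsto_const_nhds).norm)
      refine le_of_tendsto htend ?_
      filter_upwards [eventually_gt_atTop ρ] with B hB
      exact (hρ' A B (by linarith) hB).le
    rw [dist_eq_norm]
    linarith
  · -- Tendsto I₂ atTop (nhds I)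
    rw [Metric.tendsto_atTop]
    intro ε hε
    obtain ⟨ρ, hρ, hρ'⟩ := hPr (ε / 2) (by linarith)
    refine ⟨ρ + 1, fun B hB => ?_⟩
    have hbound : ‖I₂ B - I‖ ≤ ε / 2 := by
      have htend : Tendsto (fun x => ‖F x B - I‖) atTop (nhds ‖I₂ B - I‖) :=
        (((hI₂ B).sub tendsto_const_nhds).norm)
      refine le_of_tendsto htend ?_
      filter_upwards [eventually_gt_atTop ρ] with x hx
      exact (hρ' x B hx (by linarith)).le
    rw [dist_eq_norm]
    linarith
end
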